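/- arXiv:2501.15741 — 13 statements merged into one kernel-verified Lean document; each statement's English description precedes it below -/
import Mathlib

section
/- Let q = 2^m for a positive integer m. Then the polynomial f(x) = x + x^{2q^2+2} + x^{2q+2} + x^2 + x^{2q} is a permutation polynomial of the finite field F_{q^3}. -/
set_option maxHeartbeats 2000000 in
theorem stmt_0 (m : ℕ) (hm : 0 < m) (q : ℕ) (hq : q = 2 ^ m)
    (F : Type*) [Field F] [Fintype F] (hF : Fintype.card F = q ^ 3) :
    Function.Bijective
      (fun x : F => x + x ^ (2 * q ^ 2 + 2) + x ^ (2 * q + 2) + x ^ 2 + x ^ (2 * q)) := by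
  classical
  haveI hfact2 : Fact (Nat.Prime 2) := ⟨Nat.prime_two⟩
  -- characteristic 2
  haveI hchar : CharP F 2 := by
    have hcp := ringChar.charP F
    have hpp : (ringChar F).Prime := CharP.char_is_prime F (ringChar F)
    obtain ⟨n, -, hcard⟩ := FiniteField.card F (ringChar F)
    have heq : ringChar F ^ (n : ℕ) = 2 ^ (m * 3) := by
      rw [← hcard, hF, hq, ← pow_mul]
    have hdvd : ringChar F ∣ 2 ^ (m * 3) := heq ▸ dvd_pow_self (ringChar F) n.pos.ne'
    have hrc : ringChar F = 2 := (Nat.prime_dvd_prime_iff_eq hpp Nat.prime_two).mp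
      (hpp.dvd_of_dvd_pow hdvd)
    rwa [hrc] at hcp
  have h2 : (2 : F) = 0 := by exact_mod_cast CharP.cast_eq_zero F 2
  have hq0 : q ≠ 0 := by rw [hq]; positivity
  have hqadd : ∀ u v : F, (u + v) ^ q = u ^ q + v ^ q := by
    have key : ∀ n : ℕ, ∀ u v : F, (u + v) ^ 2 ^ n = u ^ 2 ^ n + v ^ 2 ^ n := by
      intro n
      induction n with
      | zero => intro u v; simp
      | succ k ih =>
        intro u v
        have e1 : 2 ^ (k + 1) = 2 ^ k * 2 := by rw [pow_succ]
        rw [e1, pow_mul, pow_mul, pow_mul, ih, add_pow_char]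
    intro u v; rw [hq]; exact key m u v
  have hqpow : ∀ (u : F) (k : ℕ), (u ^ k) ^ q = (u ^ q) ^ k := fun u k => pow_right_comm u k q
  have hcard3 : ∀ u : F, ((u ^ q) ^ q) ^ q = u := by
    intro u
    rw [← pow_mul, ← pow_mul]
    have e : q * (q * q) = q ^ 3 := by ring
    rw [e, ← hF]
    exact FiniteField.pow_card u
  have hP1 : ∀ u : F, u ^ (2 * q ^ 2 + 2) = ((u ^ q) ^ q) ^ 2 * u ^ 2 := by
    intro u
    have e1 : 2 * q ^ 2 + 2 = q * q * 2 + 2 := by ring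
    rw [e1, pow_add, pow_mul, pow_mul]
  have hP2 : ∀ u : F, u ^ (2 * q + 2) = (u ^ q) ^ 2 * u ^ 2 := by
    intro u
    have e1 : 2 * q + 2 = q * 2 + 2 := by ring
    rw [e1, pow_add, pow_mul]
  have hP3 : ∀ u : F, u ^ (2 * q) = (u ^ q) ^ 2 := by
    intro u
    have e1 : 2 * q = q * 2 := by ring
    rw [e1, pow_mul]
  refine Finite.injective_iff_bijective.mp ?_
  intro x1 x2 hfeq
  simp only at hfeq
  obtain ⟨a, hadef⟩ : ∃ u : F, u = x1 - x2 := ⟨_, rfl⟩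
  suffices ha0 : a = 0 by
    rw [hadef] at ha0
    exact sub_eq_zero.mp ha0
  have hx1 : x1 = x2 + a := by rw [hadef]; ring
  rw [hx1] at hfeq
  simp only [hP1, hP2, hP3] at hfeq
  simp only [hqadd] at hfeq
  obtain ⟨y, hy⟩ : ∃ u : F, u = x2 ^ q := ⟨_, rfl⟩
  obtain ⟨b, hb⟩ : ∃ u : F, u = a ^ q := ⟨_, rfl⟩
  rw [← hy, ← hb] at hfeq
  obtain ⟨z, hz⟩ : ∃ u : F, u = y ^ q := ⟨_, rfl⟩
  obtain ⟨c, hc⟩ : ∃ u : F, u = b ^ q := ⟨_, rfl⟩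
  rw [← hz, ← hc] at hfeq
  have hX3 : z ^ q = x2 := by rw [hz, hy]; exact hcard3 x2
  have hA3 : c ^ q = a := by rw [hc, hb]; exact hcard3 a
  -- base polynomial equation
  have hE : a + a^2 + b^2 + x2^2*b^2 + x2^2*c^2 + a^2*y^2 + a^2*z^2 + a^2*b^2 + a^2*c^2 = 0 := by
    linear_combination ((1:F)) * hfeq + ((-1)*z*a^2*c + (-1)*y*b + (-1)*y*a^2*b + (-1)*x2*a + (-1)*x2*a*c^2 + (-1)*x2*a*b^2 + (-2)*x2*z*a*c + (-1)*x2*z^2*a + (-2)*x2*y*a*b + (-1)*x2*y^2*a + (-1)*x2^2*z*c + (-1)*x2^2*y*b) * h2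
  -- conjugates
  have hE1 : b + b^2 + c^2 + y^2*c^2 + y^2*a^2 + b^2*z^2 + b^2*x2^2 + b^2*c^2 + b^2*a^2 = 0 := by
    have h' := congrArg (fun u : F => u ^ q) hE
    simp only [hqadd, mul_pow, hqpow, hX3, hA3, ← hz, ← hc, ← hy, ← hb, zero_pow hq0] at h'
    linear_combination h'
  have hE2 : c + c^2 + a^2 + z^2*a^2 + z^2*b^2 + c^2*x2^2 + c^2*y^2 + c^2*a^2 + c^2*b^2 = 0 := by
    have h' := congrArg (fun u : F => u ^ q) hE1
    simp only [hqadd, mul_pow, hqpow, hX3, hA3, ← hz, ← hc, ← hy, ← hb, zero_pow hq0] at h'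
    linear_combination h'
  have htheta : a + b + c = 0 := by
    linear_combination ((1:F)) * hE + ((1:F)) * hE1 + ((1:F)) * hE2 + ((-1)*c^2 + (-1)*b^2 + (-1)*b^2*c^2 + (-1)*a^2 + (-1)*a^2*c^2 + (-1)*a^2*b^2 + (-1)*z^2*b^2 + (-1)*z^2*a^2 + (-1)*y^2*c^2 + (-1)*y^2*a^2 + (-1)*x2^2*c^2 + (-1)*x2^2*b^2) * h2
  have hc2v : c = a + b := by
    linear_combination ((1:F)) * htheta + ((-1)*b + (-1)*a) * h2
  obtain ⟨w, hw⟩ : ∃ u : F, u = x2 + y + z := ⟨_, rfl⟩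
  obtain ⟨t, htdef⟩ : ∃ u : F, u = w ^ 2 := ⟨_, rfl⟩
  have hR1 : b^2 = a + a^2 + t*a^2 + a^4 := by
    linear_combination ((1:F)) * hE + ((-1)*a^2*c + (-1)*a^2*b + (-1)*a^3 + (-1)*x2^2*c + (-1)*x2^2*b + (-1)*x2^2*a) * hc2v + ((-1)*a^2) * htdef + ((-1)*a^2*w + (-1)*z*a^2 + (-1)*y*a^2 + (-1)*x2*a^2) * hw + ((-1)*a + (-1)*a^2 + (-1)*a^2*b^2 + (-1)*a^3*b + (-1)*a^4 + (-1)*z^2*a^2 + (-1)*y*z*a^2 + (-1)*y^2*a^2 + (-1)*x2*z*a^2 + (-1)*x2*y*a^2 + (-1)*x2^2*b^2 + (-1)*x2^2*a*b + (-1)*x2^2*a^2) * h2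
  have hwq : w ^ q = w := by
    rw [hw, hqadd, hqadd, hX3, ← hy, ← hz]
    ring
  have htq : t ^ q = t := by rw [htdef, hqpow, hwq]
  have hbq : b ^ q = a + b := by rw [← hc]; exact hc2v
  have hR2 : a^2 = b + t*b^2 + b^4 := by
    have h3 := congrArg (fun u : F => u ^ q) hR1
    simp only [hqadd, mul_pow, hqpow, htq, hbq, ← hb, zero_pow hq0] at h3
    linear_combination ((1:F)) * h3 + ((-1)*a*b) * h2
  by_cases ha : a = 0
  · exact ha
  exfalso
  have hbW : b = a*t + a^2*t + a^2*t^2 + a^4 + a^4*t + a^4*t^2 + a^8 := by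
    linear_combination ((-1:F)) * hR2 + ((-1)*t + (-1)*b^2 + (-1)*a + (-1)*a^2 + (-1)*a^2*t + (-1)*a^4) * hR1 + ((-1)*a*t + (-1)*a^2*t + (-1)*a^2*t^2 + (-1)*a^3 + (-1)*a^3*t + (-1)*a^4 + (-2)*a^4*t + (-1)*a^4*t^2 + (-1)*a^5 + (-1)*a^6 + (-1)*a^6*t + (-1)*a^8) * h2
  have hLW : (a*t + a^2*t + a^2*t^2 + a^4 + a^4*t + a^4*t^2 + a^8)^2 = a + a^2 + a^2*t + a^4 := by
    rw [← hbW]; linear_combination hR1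
  -- helper contradictions
  have kb0 : b = 0 → False := by
    intro h
    exact ha (pow_eq_zero_iff hq0 |>.mp (hb ▸ h))
  have kab : a + b = 0 → False := by
    intro h
    have hb0 : b ^ q = 0 := by rw [hbq, h]
    exact kb0 (pow_eq_zero_iff hq0 |>.mp hb0)
  have komega : a^2 + a*b + b^2 = 0 → False := by
    intro hom
    have hb3 : b^3 = a^3 := by
      linear_combination (b + a) * hom + ((-1)*a*b^2 + (-1)*a^2*b + (-1)*a^3) * h2
    have hab1 : a*(b + 1 + t*a + a^3) = 0 := by
      linear_combination ((1:F)) * hom + ((1:F)) * hR1 + ((-1)*b^2 + a + a^2*t + a^4) * h2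
    rcases mul_eq_zero.mp hab1 with h | hb1
    · exact ha h
    have hbexpr : b = 1 + t*a + a^3 := by
      linear_combination ((1:F)) * hb1 + ((-1:F) + (-1)*a*t + (-1)*a^3) * h2
    have h5 : a + b = 1 + t*b + b^3 := by
      have h' := congrArg (fun u : F => u ^ q) hbexpr
      simp only [hqadd, mul_pow, hqpow, htq, hbq, ← hb, one_pow] at h'
      linear_combination h'
    have hA : a = t*(a+b) := by
      linear_combination ((-1:F)) * hbexpr + ((1:F)) * h5 + ((1:F)) * hb3 + ((-1)*a*t) * h2
    have h6 : a^2 = (t*(a+b))^2 := by rw [← hA]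
    have h9 : a^2 = t^2*(a*b) := by
      linear_combination ((1:F)) * h6 + (t^2) * hom
    have h10 : a*(a + t^2*b) = 0 := by
      linear_combination ((1:F)) * h9 + (a*b*t^2) * h2
    rcases mul_eq_zero.mp h10 with h | hatb
    · exact ha h
    have hatb2 : a = t^2*b := by
      linear_combination ((1:F)) * hatb + ((-1)*b*t^2) * h2
    have hTz : b*(t*(t^2 + t + 1)) = 0 := by
      linear_combination ((-1:F)) * hA + ((1:F) + t) * hatb2 + (b*t^2 + b*t^3 + (-1)*a*t) * h2
    rcases mul_eq_zero.mp hTz with h | h'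
    · exact kb0 h
    rcases mul_eq_zero.mp h' with ht0 | hT
    · exact ha (by linear_combination hatb2 + t*b*ht0)
    have ht3 : t^3 = 1 := by linear_combination (t - 1) * hT
    have htb : b = t*a := by linear_combination (-t)*hatb2 + (-b)*ht3
    have hA3' : a^3 = 1 := by linear_combination (-1)*hbexpr + htb + (-1)*h2
    have hsplit : (a + 1)*(a^2 + a + 1) = 0 := by
      linear_combination hA3' + (a^2 + a + 1)*h2
    rcases mul_eq_zero.mp hsplit with hA1 | haa
    · have ha1 : a = 1 := by linear_combination hA1 + (-1)*h2
      have hbt : b = t := by linear_combination htb + t*ha1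
      have h7 := congrArg (fun u : F => u ^ q) hbt
      simp only [hbq, htq] at h7
      exact ha (by linear_combination h7 + (-1)*hbt)
    have hsplit2 : (t + a)*(t + a + 1) = 0 := by
      linear_combination hT + haa + (t*a - 1)*h2
    rcases mul_eq_zero.mp hsplit2 with h8a | h8b
    · have hba2 : b = a^2 := by linear_combination htb + (-a)*h8a + t*a*h2
      have h9' := congrArg (fun u : F => u ^ q) hba2
      simp only [hqpow, ← hb, hbq] at h9'
      have haz : a^2 = 0 := by linear_combination h9' + (b + a^2 - 1)*hba2 + a*hA3'
      exact ha (pow_eq_zero_iff (by norm_num : (2:ℕ) ≠ 0) |>.mp haz)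
    · have hb1' : b = 1 := by linear_combination htb + a*h8b + (-1)*haa
      have h10' := congrArg (fun u : F => u ^ q) hb1'
      simp only [one_pow, hbq] at h10'
      exact ha (by linear_combination h10' + (-1)*hb1')
  -- the product identity
  have h12s : (b^5 + a^2*b^3*t + a^3*b^2 + a^4*b*t + a^5) * (b^5 + a*b^4 + a^2*b^3 + a^2*b^3*t + a^3*b^2*t + a^4*b + a^5) = a^5 + a^5*b + a^6*t + a^6*b + a^7*t^2 + a^7*b*t + a^7*b*t^2 + a^8*t + a^8*t^3 + a^8*b + a^9*t^2 + a^9*b + a^10 + a^10*t + a^11*b + a^12*t^2 + a^12*b + a^13*t^2 + a^13*b*t + a^13*b*t^2 + a^14 + a^14*t + a^14*t^3 + a^15*b + a^16*t^2 + a^17 + a^17*b + a^18*t + a^20 := by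
    linear_combination (b^8 + a*b^6 + a*b^7 + a^2*b^4 + a^2*b^5 + a^2*b^6*t + a^3*b^2 + a^3*b^3 + a^3*b^4 + a^3*b^5*t + a^4 + a^4*b + a^4*b^2*t + a^4*b^3 + a^4*b^4*t + a^4*b^6 + a^5 + a^5*b*t + a^5*b^2 + a^5*b^3 + a^5*b^3*t + a^5*b^5 + a^6 + a^6*t + a^6*t^2 + a^6*b^4 + a^7*t + a^7*b^3 + a^8 + a^8*t + a^8*b^2 + a^8*b^4 + a^9*b^2 + a^9*b^3 + a^10*t + a^10*b + a^10*b^2*t + a^11 + a^11*b*t + a^12 + a^12*t + a^12*t^2 + a^12*b^2 + a^13*b + a^14 + a^16) * hR1 + (a^2*b^8 + a^2*b^8*t + a^3*b^6*t + a^3*b^7 + a^3*b^7*t + a^4*b^4 + a^4*b^5*t + a^4*b^6 + a^4*b^6*t + a^4*b^6*t^2 + a^5*b^2*t + a^5*b^3 + a^5*b^4*t + a^5*b^5 + a^5*b^5*t + a^5*b^5*t^2 + a^5*b^6 + a^6 + a^6*b*t + a^6*b^3 + a^6*b^3*t + a^6*b^4 + (2)*a^6*b^4*t + a^6*b^4*t^2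 + a^6*b^5 + a^6*b^6*t + a^7 + a^7*t + a^7*b^2 + (2)*a^7*b^3 + (2)*a^7*b^3*t + a^7*b^3*t^2 + a^7*b^4 + a^7*b^5*t + a^8 + a^8*t + a^8*t^2 + a^8*b^2*t + a^8*b^3 + a^8*b^4*t + a^9 + a^9*t + a^9*b*t + a^9*b^2 + a^9*b^3 + a^9*b^3*t + a^10 + a^10*t + a^10*t^2 + a^10*b^2 + a^10*b^4 + a^11*t + a^11*b^2*t + a^11*b^3 + a^12 + a^12*t + a^12*b*t + a^13 + a^13*t + a^13*b^2 + a^14*t + a^14*t^2 + a^14*b + a^14*b^2*t + a^15 + a^15*b*t + a^16 + a^16*t + a^18) * h2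
  have h123s : (a^5 + a^5*b + a^6*t + a^6*b + a^7*t^2 + a^7*b*t + a^7*b*t^2 + a^8*t + a^8*t^3 + a^8*b + a^9*t^2 + a^9*b + a^10 + a^10*t + a^11*b + a^12*t^2 + a^12*b + a^13*t^2 + a^13*b*t + a^13*b*t^2 + a^14 + a^14*t + a^14*t^3 + a^15*b + a^16*t^2 + a^17 + a^17*b + a^18*t + a^20) * (b^5 + a*b^4 + a*b^4*t + a^2*b^3 + a^3*b^2 + a^3*b^2*t + a^5) = a^7*b + a^8*t + a^9*t + a^9*t^2 + a^11 + a^11*t + a^11*t^2 + a^11*b + a^11*b*t^2 + a^11*b*t^4 + a^12 + a^12*t + a^12*t^3 + a^12*t^5 + a^13 + a^13*t^3 + a^13*t^4 + a^13*t^5 + a^13*t^6 + a^13*b + a^13*b*t^2 + a^13*b*t^4 + a^14 + a^14*t^2 + a^14*t^3 + a^14*t^5 + a^14*b + a^14*b*t + a^14*b*t^2 + a^15*t^2 + a^15*t^3 + a^15*t^4 + a^16*b + a^16*b*t^2 + a^16*b*t^4 + a^17 + a^17*t^2 + a^17*t^3 + a^17*t^5 + a^17*b + a^17*b*t^2 +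 a^17*b*t^4 + a^18 + a^18*t + a^18*t^3 + a^18*t^5 + a^19 + a^19*t^3 + a^19*t^4 + a^19*t^5 + a^19*t^6 + a^19*b + a^20*t + a^20*b + a^20*b*t^2 + a^20*b*t^4 + a^21 + a^21*t^2 + a^21*t^3 + a^21*t^5 + a^23 + a^23*t + a^23*t^2 + a^25*b + a^26*t + a^27*t + a^27*t^2 + a^28*b + a^29*t := by
    linear_combination (a^5*b^3 + a^5*b^4 + a^6*b + a^6*b^2*t + a^6*b^3 + a^6*b^4 + a^7*t + a^7*b + a^7*b*t + a^7*b^2 + a^7*b^2*t^2 + a^7*b^3 + a^7*b^3*t + a^7*b^3*t^2 + a^7*b^4*t + a^7*b^4*t^2 + a^8*b + a^8*b*t^2 + a^8*b^2*t^3 + a^8*b^4 + a^9 + a^9*b + a^9*b*t + a^9*b*t^2 + a^9*b*t^3 + a^9*b^2*t + a^9*b^2*t^4 + a^9*b^3 + a^9*b^3*t + a^9*b^3*t^2 + a^9*b^4 + a^10*t^2 + a^10*b*t + a^10*b*t^2 + a^10*b^2*t + a^10*b^2*t^2 + a^10*b^2*t^3 + a^11 + a^11*t + a^11*t^5 + a^11*b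 + a^11*b*t^3 + a^11*b^2 + a^11*b^4 + a^12 + a^12*t + a^12*t^2 + a^12*t^4 + a^12*b^3 + a^12*b^3*t + a^12*b^3*t^2 + a^12*b^4 + a^13*t^2 + a^13*t^4 + a^13*b^2*t + a^13*b^2*t^2 + a^13*b^2*t^3 + a^13*b^3 + a^13*b^3*t + a^13*b^3*t^2 + a^13*b^4*t + a^13*b^4*t^2 + a^14*b + a^14*b*t^3 + a^14*b^2*t^3 + a^14*b^3 + a^15 + a^15*t + a^15*t^2 + a^15*t^4 + a^15*b + a^15*b*t + a^15*b*t^2 + a^15*b*t^3 + a^15*b^2*t^4 + a^15*b^4 + a^16*t^2 + a^16*b + a^16*b*t^2 + a^16*b^3 + a^16*b^3*t + a^16*b^3*t^2 + a^17 + a^17*t + a^17*t^5 + a^17*b^2*t^3 + a^17*b^3 + a^17*b^4 + a^18*b*t + a^18*b*t^2 + a^18*b*t^3 + a^18*b^2*t + a^18*b^3 + a^19*t + a^19*t^2 + a^19*b + a^19*b*t + a^19*b^2 + a^19*b^2*t^2 + a^20*b + a^20*b*t^2 + a^20*b^3 + a^21 + a^21*b^2*t + a^22*b + a^22*b*t +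 a^24*b + a^25*t) * hR1 + (a^6*b^4 + a^6*b^5*t + a^7*b^3 + a^7*b^4 + a^7*b^4*t + a^8*b + a^8*b*t + a^8*b^2 + a^8*b^2*t + a^8*b^2*t^2 + a^8*b^3 + (2)*a^8*b^3*t + a^8*b^4 + a^8*b^4*t + a^8*b^4*t^2 + a^8*b^5*t + a^8*b^5*t^2 + a^8*b^5*t^3 + a^9*b + a^9*b*t + a^9*b*t^2 + a^9*b^2*t + a^9*b^2*t^2 + a^9*b^2*t^3 + a^9*b^3 + a^9*b^3*t + a^9*b^3*t^2 + a^9*b^4 + a^9*b^4*t + (2)*a^9*b^4*t^2 + a^9*b^4*t^3 + a^10 + (2)*a^10*b + a^10*b*t + a^10*b*t^2 + a^10*b*t^3 + a^10*b^2*t + a^10*b^2*t^3 + a^10*b^2*t^4 + a^10*b^3 + a^10*b^3*t + a^10*b^3*t^2 + a^10*b^3*t^3 + (2)*a^10*b^4 + a^10*b^5 + a^10*b^5*t + a^11*t + a^11*b + (2)*a^11*b*t + a^11*b*t^2 + a^11*b*t^3 + a^11*b^2*t + (2)*a^11*b^2*t^2 + a^11*b^2*t^3 + a^11*b^2*t^4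 + a^11*b^3 + (2)*a^11*b^3*t + (2)*a^11*b^3*t^2 + a^11*b^4 + (2)*a^11*b^4*t + a^11*b^4*t^2 + a^12*t^2 + a^12*b + a^12*b*t + (2)*a^12*b*t^2 + a^12*b*t^3 + a^12*b^2*t^2 + (2)*a^12*b^2*t^3 + a^12*b^3 + a^12*b^3*t + a^12*b^4 + a^13 + (2)*a^13*t + a^13*t^2 + a^13*b + a^13*b*t + a^13*b*t^3 + a^13*b^2 + (2)*a^13*b^2*t + a^13*b^3 + a^13*b^3*t + a^13*b^3*t^2 + (2)*a^13*b^4 + a^14*t + (2)*a^14*t^2 + a^14*t^4 + a^14*b^2*t + a^14*b^2*t^2 + a^14*b^2*t^3 + a^14*b^3 + (2)*a^14*b^3*t + (2)*a^14*b^3*t^2 + a^14*b^4 + a^14*b^4*t + a^14*b^4*t^2 + a^14*b^5*t + a^14*b^5*t^2 + a^14*b^5*t^3 + a^15 + a^15*t + a^15*t^5 + a^15*b + a^15*b*t^3 + a^15*b^2*t^2 + (2)*a^15*b^2*t^3 + a^15*b^3 + a^15*b^3*t + a^15*b^3*t^2 + a^15*b^4 + (2)*a^15*b^4*t + (2)*a^15*b^4*t^2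 + a^15*b^4*t^3 + a^16 + a^16*t + a^16*t^2 + a^16*t^4 + a^16*b + a^16*b*t + a^16*b*t^3 + a^16*b^2*t^3 + a^16*b^2*t^4 + a^16*b^3 + (2)*a^16*b^3*t + a^16*b^3*t^2 + a^16*b^3*t^3 + a^16*b^4 + a^17*t + (2)*a^17*t^2 + a^17*t^4 + a^17*b + a^17*b*t + a^17*b*t^2 + a^17*b*t^3 + a^17*b^2*t + a^17*b^2*t^2 + a^17*b^2*t^3 + a^17*b^2*t^4 + a^17*b^3 + a^17*b^3*t + a^17*b^3*t^2 + a^17*b^4 + a^17*b^4*t + a^17*b^4*t^2 + a^18*t^2 + a^18*b + a^18*b*t + a^18*b*t^2 + a^18*b*t^3 + a^18*b^2*t^3 + (2)*a^18*b^3 + a^18*b^3*t + a^18*b^3*t^2 + a^18*b^4 + a^18*b^5*t + a^19 + (2)*a^19*t + a^19*t^2 + a^19*b*t + a^19*b*t^2 + a^19*b*t^3 + a^19*b^2*t^3 + a^19*b^2*t^4 + a^19*b^3 + a^19*b^4 + a^19*b^4*t + a^20*t^2 + a^20*b + a^20*b*t + a^20*b*t^2 + a^20*b*t^3 + a^20*b^2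 + a^20*b^2*t + a^20*b^2*t^2 + a^20*b^3 + (2)*a^20*b^3*t + a^21*t + a^21*t^2 + a^21*b + a^21*b*t + a^21*b*t^2 + a^21*b^2*t + a^21*b^2*t^2 + a^21*b^2*t^3 + a^21*b^3 + a^21*b^4 + a^22 + a^22*b + a^22*b*t + a^22*b*t^2 + a^22*b*t^3 + a^22*b^2*t + a^22*b^3 + a^23*t + a^23*b + a^23*b*t + a^23*b^2 + a^23*b^2*t + a^23*b^2*t^2 + a^24*b + a^24*b*t + a^24*b*t^2 + a^25 + a^26*b + a^26*b*t) * h2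
  have h0s : (a^7*b + a^8*t + a^9*t + a^9*t^2 + a^11 + a^11*t + a^11*t^2 + a^11*b + a^11*b*t^2 + a^11*b*t^4 + a^12 + a^12*t + a^12*t^3 + a^12*t^5 + a^13 + a^13*t^3 + a^13*t^4 + a^13*t^5 + a^13*t^6 + a^13*b + a^13*b*t^2 + a^13*b*t^4 + a^14 + a^14*t^2 + a^14*t^3 + a^14*t^5 + a^14*b + a^14*b*t + a^14*b*t^2 + a^15*t^2 + a^15*t^3 + a^15*t^4 + a^16*b + a^16*b*t^2 + a^16*b*t^4 + a^17 + a^17*t^2 + a^17*t^3 + a^17*t^5 + a^17*b + a^17*b*t^2 + a^17*b*t^4 + a^18 + a^18*t + a^18*t^3 + a^18*t^5 + a^19 + a^19*t^3 + a^19*t^4 + a^19*t^5 + a^19*t^6 + a^19*b + a^20*t + a^20*b + a^20*b*t^2 + a^20*b*t^4 + a^21 + a^21*t^2 + a^21*t^3 + a^21*t^5 + a^23 + a^23*t + a^23*t^2 + a^25*b + a^26*t + a^27*t + a^27*t^2 + a^28*b + a^29*t) = 0 := by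
    linear_combination (a^7 + a^11 + a^11*t^2 + a^11*t^4 + a^13 + a^13*t^2 + a^13*t^4 + a^14 + a^14*t + a^14*t^2 + a^16 + a^16*t^2 + a^16*t^4 + a^17 + a^17*t^2 + a^17*t^4 + a^19 + a^20 + a^20*t^2 + a^20*t^4 + a^25 + a^28) * hbW + (a^11 + a^13 + a^13*t + a^13*t^2 + a^14*t + a^14*t^2 + a^16 + a^16*t + a^16*t^2 + a^17 + a^20) * hLW + (a^8*t + a^9*t + a^9*t^2 + a^11 + a^11*t + a^11*t^2 + a^12 + a^12*t + a^12*t^3 + a^12*t^5 + a^13 + a^13*t + a^13*t^3 + a^13*t^4 + a^13*t^5 + a^13*t^6 + a^14 + a^14*t + a^14*t^5 + (2)*a^15 + (3)*a^15*t + (3)*a^15*t^2 + a^15*t^3 + a^15*t^4 + a^15*t^5 + a^15*t^6 + (-2)*a^16*t^3 + (-2)*a^16*t^4 + (-1)*a^16*t^5 + (2)*a^17 + a^17*t + (-3)*a^17*t^3 + (-4)*a^17*t^4 + (-1)*a^17*t^5 + (2)*a^18 + (3)*a^18*t + a^18*t^2 + (-1)*a^18*t^3 + (-3)*a^18*t^4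 + (-1)*a^18*t^5 + a^19 + (-1)*a^19*t + (-6)*a^19*t^2 + (-9)*a^19*t^3 + (-8)*a^19*t^4 + (-4)*a^19*t^5 + a^20 + a^20*t + (-1)*a^20*t^2 + (-5)*a^20*t^3 + (-5)*a^20*t^4 + (-4)*a^20*t^5 + (-1)*a^20*t^6 + (2)*a^21 + (-2)*a^21*t + (-4)*a^21*t^2 + (-6)*a^21*t^3 + (-4)*a^21*t^4 + (-1)*a^21*t^5 + a^22 + (-2)*a^22*t + (-6)*a^22*t^2 + (-9)*a^22*t^3 + (-7)*a^22*t^4 + (-4)*a^22*t^5 + (-1)*a^22*t^6 + (-2)*a^23*t + (-6)*a^23*t^2 + (-6)*a^23*t^3 + (-2)*a^23*t^4 + a^24 + (-1)*a^24*t + (-3)*a^24*t^2 + (-6)*a^24*t^3 + (-3)*a^24*t^4 + (-1)*a^24*t^5 + (-1)*a^25 + (-5)*a^25*t + (-6)*a^25*t^2 + (-5)*a^25*t^3 + (-1)*a^25*t^4 + (-3)*a^26*t + (-6)*a^26*t^2 + (-6)*a^26*t^3 + (-3)*a^26*t^4 + (-1)*a^28 + (-3)*a^28*t + (-4)*a^28*t^2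 + (-3)*a^28*t^3 + (-1)*a^28*t^4 + (-1)*a^29 + (-1)*a^29*t + (-1)*a^29*t^2 + (-1)*a^30*t + (-1)*a^30*t^2 + (-1)*a^32 + (-1)*a^32*t + (-1)*a^32*t^2) * h2
  have hprod : (b^5 + a^2*b^3*t + a^3*b^2 + a^4*b*t + a^5) * (b^5 + a*b^4 + a^2*b^3 + a^2*b^3*t + a^3*b^2*t + a^4*b + a^5) * (b^5 + a*b^4 + a*b^4*t + a^2*b^3 + a^3*b^2 + a^3*b^2*t + a^5) = 0 := by
    rw [h12s, h123s, h0s]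
  rcases mul_eq_zero.mp hprod with h12z | hF3
  · rcases mul_eq_zero.mp h12z with hF1 | hF2
    · -- factor 1 vanishes; transport to factor 2
      have h4 := congrArg (fun u : F => u ^ q) hF1
      simp only [hqadd, mul_pow, hqpow, htq, hbq, ← hb, zero_pow hq0] at h4
      have hF2 : (b^5 + a*b^4 + a^2*b^3 + a^2*b^3*t + a^3*b^2*t + a^4*b + a^5) = 0 := by
        linear_combination ((1:F)) * h4 + ((-1)*b^5 + (-1)*b^5*t + (-3)*a*b^4 + (-2)*a*b^4*t + (-5)*a^2*b^3 + (-1)*a^2*b^3*t + (-5)*a^3*b^2 + (-2)*a^4*b) * h2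
      have hZ : a^6*b*(a+b)*(a^2+a*b+b^2) = 0 := by
        linear_combination (a^2*b^3 + a^3*b^2) * hF1 + ((-1)*a^2*b^3 + (-1)*a^4*b) * hF2 + (a^4*b^6 + a^6*b^4 + a^7*b^3 + a^8*b^2 + a^9*b) * h2
      rcases mul_eq_zero.mp hZ with h' | hom
      · rcases mul_eq_zero.mp h' with h'' | habz
        · rcases mul_eq_zero.mp h'' with h6z | hbz
          · exact ha (pow_eq_zero_iff (by norm_num) |>.mp h6z)
          · exact kb0 hbz
        · exact kab habz
      · exact komega hom
    · -- factor 2 vanishes; transport to factor 3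
      have h4 := congrArg (fun u : F => u ^ q) hF2
      simp only [hqadd, mul_pow, hqpow, htq, hbq, ← hb, zero_pow hq0] at h4
      have hF3 : (b^5 + a*b^4 + a*b^4*t + a^2*b^3 + a^3*b^2 + a^3*b^2*t + a^5) = 0 := by
        linear_combination ((1:F)) * h4 + ((-2)*b^5 + (-1)*b^5*t + (-6)*a*b^4 + (-2)*a*b^4*t + (-9)*a^2*b^3 + (-2)*a^2*b^3*t + (-7)*a^3*b^2 + (-3)*a^4*b) * h2
      have hZ : a*b^6*(a+b)*(a^2+a*b+b^2) = 0 := by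
        linear_combination (a*b^4 + a^3*b^2) * hF2 + ((-1)*a^2*b^3 + (-1)*a^3*b^2) * hF3 + (a^2*b^8 + a^3*b^7 + a^4*b^6) * h2
      rcases mul_eq_zero.mp hZ with h' | hom
      · rcases mul_eq_zero.mp h' with h'' | habz
        · rcases mul_eq_zero.mp h'' with haz | hb6z
          · exact ha haz
          · exact kb0 (pow_eq_zero_iff (by norm_num) |>.mp hb6z)
        · exact kab habz
      · exact komega hom
  · -- factor 3 vanishes; transport to factor 1
    have h4 := congrArg (fun u : F => u ^ q) hF3
    simp only [hqadd, mul_pow, hqpow, htq, hbq, ← hb, zero_pow hq0] at h4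
    have hF1 : (b^5 + a^2*b^3*t + a^3*b^2 + a^4*b*t + a^5) = 0 := by
      linear_combination ((1:F)) * h4 + ((-2)*b^5 + (-1)*b^5*t + (-7)*a*b^4 + (-3)*a*b^4*t + (-10)*a^2*b^3 + (-3)*a^2*b^3*t + (-7)*a^3*b^2 + (-2)*a^3*b^2*t + (-3)*a^4*b) * h2
    have hZ : a*b*(a+b)^6*(a^2+a*b+b^2) = 0 := by
      linear_combination (a^2*b^3 + a^4*b) * hF3 + ((-1)*a*b^4 + (-1)*a^3*b^2) * hF1 + (a*b^9 + (3)*a^2*b^8 + (11)*a^3*b^7 + (20)*a^4*b^6 + (24)*a^5*b^5 + (21)*a^6*b^4 + (10)*a^7*b^3 + (4)*a^8*b^2) * h2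
    rcases mul_eq_zero.mp hZ with h' | hom
    · rcases mul_eq_zero.mp h' with h'' | hab6z
      · rcases mul_eq_zero.mp h'' with haz | hbz
        · exact ha haz
        · exact kb0 hbz
      · exact kab (pow_eq_zero_iff (by norm_num) |>.mp hab6z)
    · exact komega hom
end

section
/- Let q = 2^m for a positive integer m. Then the polynomial f(x) = x + x^{4q^2+1} + x^{q+4} + x^{q^2+4} + x^{4q+1} is a permutation polynomial of F_{q^3} if and only if m is odd. -/
/-!
Write `T x = x + x^q + x^{q^2}` for the trace of `𝔽_{q^3}` over `𝔽_q`. In characteristic 2 the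
polynomial is `f x = x + T(x)^4 x + T(x) x^4`, and `T ∘ f = T`. Hence `f x = f (x + u)` forces
`T u = 0` and, for `u ≠ 0`, `s u^3 = 1 + s^4` with `s = T x ∈ 𝔽_q`, so `u^3 ∈ 𝔽_q`.

For odd `m`, `3` is prime to `q^3 - 1`, so cubing is injective and `u^3 ∈ 𝔽_q` gives `u ∈ 𝔽_q`;
then `T u = 3u = u ≠ 0`, a contradiction. For even `m`, `q ≡ 1 (mod 3)` and there is `w ∉ 𝔽_q` with
`a = w^3 ∈ 𝔽_q`. The conjugates of `w` are `w, vw, v²w` for a cube root of unity `v ≠ 1`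
lying in `𝔽_q`, so `T w = 0`, and `s = (1 + a)⁻¹`, `u = a s w` solve the equations above, giving a collision.
-/

open Polynomial

namespace FqCubed

lemma two_pow_mod_three_eq_one_iff {m : ℕ} : 2 ^ m % 3 = 1 ↔ Even m := by
  rcases Nat.even_or_odd' m with ⟨k, rfl | rfl⟩ <;>
    simp [pow_succ, pow_mul, Nat.mul_mod, Nat.pow_mod, parity_simps]

variable {F : Type*} [Field F]

/-- For `F = 𝔽_{q^3}` this is the trace of `F` over its subfield `𝔽_q = {x | x ^ q = x}`. -/
def relTrace (q : ℕ) (x : F) : F := x + x ^ q + x ^ q ^ 2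

section relTrace

variable {q : ℕ}

lemma relTrace_mul_of_pow_eq {a : F} (ha : a ^ q = a) (x : F) :
    relTrace q (a * x) = a * relTrace q x := by
  simp only [relTrace, mul_pow, sq, pow_mul, ha]
  ring

lemma relTrace_of_pow_eq {u : F} (hu : u ^ q = u) : relTrace q u = 3 * u := by
  rw [relTrace, sq, pow_mul, hu, hu]
  ring

lemma relTrace_eq_zero_of_pow_three (hq : q % 3 = 1) {w : F} (hw3 : (w ^ 3) ^ q = w ^ 3)
    (hw : w ^ q ≠ w) : relTrace q w = 0 := by
  have hw0 : w ≠ 0 := by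
    rintro rfl
    exact hw (zero_pow (by omega))
  set v := w ^ q / w
  have hwq : w ^ q = v * w := (div_mul_cancel₀ _ hw0).symm
  have hv3 : v ^ 3 = 1 := by
    rw [div_pow, ← pow_mul, mul_comm, pow_mul, hw3, div_self (pow_ne_zero 3 hw0)]
  have hv1 : v ≠ 1 := fun h => hw (by rw [hwq, h, one_mul])
  have hvq : v ^ q = v := by
    rw [← Nat.div_add_mod q 3, hq, pow_add, pow_mul, hv3, one_pow, one_mul, pow_one]
  have hv : 1 + v + v ^ 2 = 0 := by
    have : (v - 1) * (1 + v + v ^ 2) = 0 := by linear_combination hv3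
    exact (mul_eq_zero.mp this).resolve_left (sub_ne_zero.mpr hv1)
  rw [relTrace, sq, pow_mul, hwq, mul_pow, hvq, hwq]
  linear_combination w * hv

lemma exists_relTrace_ne_zero [Fintype F] (hq : 1 < q) (hF : q ^ 2 < Fintype.card F) :
    ∃ x : F, relTrace q x ≠ 0 := by
  by_contra! h
  have hP : (X + X ^ q + X ^ q ^ 2 : F[X]) = 0 := by
    refine eq_zero_of_natDegree_lt_card_of_eval_eq_zero _ Function.injective_id
      (fun x => by simpa [relTrace] using h x) (lt_of_le_of_lt ?_ hF)
    have : q ≤ q ^ 2 := Nat.le_self_pow two_ne_zero q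
    refine natDegree_add_le_of_degree_le (natDegree_add_le_of_degree_le ?_ ?_) ?_ <;>
      simp only [natDegree_X, natDegree_X_pow] <;> omega
  have := congrArg (coeff · 1) hP
  have hq2 : 1 < q ^ 2 := Nat.one_lt_pow two_ne_zero hq
  simp [coeff_X_pow, hq.ne, hq2.ne] at this

variable (p n : ℕ) [ExpChar F p]

lemma relTrace_add (x y : F) :
    relTrace (p ^ n) (x + y) = relTrace (p ^ n) x + relTrace (p ^ n) y := by
  simp only [relTrace, ← pow_mul, add_pow_expChar_pow]
  ring

lemma relTrace_pow_expChar_pow (k : ℕ) (x : F) :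
    relTrace (p ^ n) x ^ p ^ k = relTrace (p ^ n) (x ^ p ^ k) := by
  simp only [relTrace, add_pow_expChar_pow, ← pow_mul, mul_comm]

variable {p n}

lemma relTrace_pow_self {x : F} (hx : x ^ (p ^ n) ^ 3 = x) :
    relTrace (p ^ n) x ^ p ^ n = relTrace (p ^ n) x := by
  rw [relTrace_pow_expChar_pow, relTrace, relTrace, ← pow_mul, ← pow_mul, ← sq,
    show p ^ n * (p ^ n) ^ 2 = (p ^ n) ^ 3 by ring, hx]
  ring

lemma relTrace_surjective [Fintype F] (hF : Fintype.card F = (p ^ n) ^ 3)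
    {b : F} (hb : b ^ p ^ n = b) : ∃ x, relTrace (p ^ n) x = b := by
  have hq : 1 < p ^ n := (Nat.one_lt_pow_iff three_ne_zero).mp (hF ▸ Fintype.one_lt_card)
  have hfix (x : F) : x ^ (p ^ n) ^ 3 = x := by
    rw [← hF]; exact FiniteField.pow_card x
  obtain ⟨x, hx⟩ := exists_relTrace_ne_zero hq (by
    rw [hF]; exact Nat.pow_lt_pow_right hq (by norm_num))
  refine ⟨b / relTrace (p ^ n) x * x, ?_⟩
  rw [relTrace_mul_of_pow_eq (by rw [div_pow, hb, relTrace_pow_self (hfix x)]),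
    div_mul_cancel₀ _ hx]

end relTrace

lemma pow_injective_of_coprime_card_sub_one [Fintype F] {k : ℕ} (hk : k ≠ 0)
    (h : k.Coprime (Fintype.card F - 1)) : Function.Injective (fun x : F => x ^ k) := by
  have hunits : (Nat.card Fˣ).Coprime k := by
    rwa [Nat.card_units, Nat.card_eq_fintype_card, Nat.coprime_comm]
  intro x y hxy
  simp only at hxy
  rcases eq_or_ne x 0 with rfl | hx
  · exact ((pow_eq_zero_iff hk).mp (hxy.symm.trans (zero_pow hk))).symm
  have hy : y ≠ 0 := by
    rintro rfl
    exact hx ((pow_eq_zero_iff hk).mp (hxy.trans (zero_pow hk)))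
  have := hunits.pow_left_bijective.injective
    (a₁ := Units.mk0 x hx) (a₂ := Units.mk0 y hy) (Units.ext (by simpa using hxy))
  simpa using congrArg Units.val this

lemma exists_pow_three_pow_eq_and_pow_ne [Fintype F] {q : ℕ} (hF : Fintype.card F = q ^ 3)
    (hq : q % 3 = 1) : ∃ w : F, (w ^ 3) ^ q = w ^ 3 ∧ w ^ q ≠ w := by
  obtain ⟨g, hg⟩ := IsCyclic.exists_ofOrder_eq_natCard (α := Fˣ)
  rw [Nat.card_units, Nat.card_eq_fintype_card, hF] at hg
  obtain ⟨r, rfl⟩ : ∃ r, q = 3 * r + 1 := ⟨q / 3, by omega⟩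
  -- `w = g ^ k` with `3 * k = q ^ 2 + q + 1` has order `3 * (q - 1)`
  set k := 3 * r ^ 2 + 3 * r + 1
  have hord : orderOf g = 9 * (r * k) := by rw [hg]; apply Nat.sub_eq_of_eq_add; ring
  have hr : 0 < r * k := by
    have := orderOf_pos g
    omega
  refine ⟨(g ^ k : Fˣ), ?_, ?_⟩
  · rw [← Units.val_pow_eq_pow_val, ← Units.val_pow_eq_pow_val, Units.val_inj]
    simp only [← pow_mul]
    rw [pow_eq_pow_iff_modEq, hord, show k * 3 * (3 * r + 1) = 9 * (r * k) + k * 3 by ring]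
    exact Nat.add_modEq_right_iff.mpr dvd_rfl
  · rw [← Units.val_pow_eq_pow_val, Ne, Units.val_inj, ← pow_mul, pow_eq_pow_iff_modEq, hord,
      show k * (3 * r + 1) = 3 * (r * k) + k by ring, Nat.add_modEq_right_iff]
    intro h
    have := Nat.le_of_dvd (by omega) h
    omega

def relTraceMap (q : ℕ) (x : F) : F := x + relTrace q x ^ 4 * x + relTrace q x * x ^ 4

section CharTwo

variable [CharP F 2]

lemma add_pow_four (x y : F) : (x + y) ^ 4 = x ^ 4 + y ^ 4 := add_pow_char_pow x y 2 2

lemma relTraceMap_eq (q : ℕ) (x : F) :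
    x + x ^ (4 * q ^ 2 + 1) + x ^ (q + 4) + x ^ (q ^ 2 + 4) + x ^ (4 * q + 1) =
      relTraceMap q x := by
  simp only [relTraceMap, relTrace, add_pow_four]
  linear_combination (-x ^ 5) * CharTwo.two_eq_zero (R := F)

variable {n : ℕ}

lemma relTrace_relTraceMap {x : F} (hx : x ^ (2 ^ n) ^ 3 = x) :
    relTrace (2 ^ n) (relTraceMap (2 ^ n) x) = relTrace (2 ^ n) x := by
  set s := relTrace (2 ^ n) x
  have hs : s ^ 2 ^ n = s := relTrace_pow_self hx
  have hs4 : (s ^ 4) ^ 2 ^ n = s ^ 4 := by rw [← pow_mul, mul_comm, pow_mul, hs]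
  have h4 : relTrace (2 ^ n) (x ^ 4) = s ^ 4 := (relTrace_pow_expChar_pow 2 n 2 x).symm
  rw [relTraceMap, relTrace_add, relTrace_add, relTrace_mul_of_pow_eq hs4,
    relTrace_mul_of_pow_eq hs, h4]
  linear_combination s ^ 5 * CharTwo.two_eq_zero (R := F)

lemma relTraceMap_add {u : F} (hu : relTrace (2 ^ n) u = 0) (x : F) :
    relTraceMap (2 ^ n) (x + u) = relTraceMap (2 ^ n) x +
      u * (1 + relTrace (2 ^ n) x ^ 4 + relTrace (2 ^ n) x * u ^ 3) := by
  rw [relTraceMap, relTraceMap, relTrace_add, hu, add_zero, add_pow_four]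
  ring

variable [Fintype F]

lemma relTraceMap_injective (hF : Fintype.card F = (2 ^ n) ^ 3)
    (h3 : Nat.Coprime 3 (Fintype.card F - 1)) :
    Function.Injective (relTraceMap (2 ^ n) : F → F) := by
  have hfix (x : F) : x ^ (2 ^ n) ^ 3 = x := by rw [← hF]; exact FiniteField.pow_card x
  intro x y hxy
  set s := relTrace (2 ^ n) x
  obtain ⟨u, rfl⟩ : ∃ u, y = x + u := ⟨y - x, by ring⟩
  have hu : relTrace (2 ^ n) u = 0 := by
    have := congrArg (relTrace (2 ^ n)) hxy
    rwa [relTrace_relTraceMap (hfix x), relTrace_relTraceMap (hfix _), relTrace_add,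
      left_eq_add] at this
  suffices u = 0 by rw [this, add_zero]
  by_contra hu0
  have hker : 1 + s ^ 4 + s * u ^ 3 = 0 := by
    rw [relTraceMap_add hu, left_eq_add, mul_eq_zero] at hxy
    exact hxy.resolve_left hu0
  have hs0 : s ≠ 0 := by
    rintro hs
    simp [hs] at hker
  have hu3 : u ^ 3 = (1 + s ^ 4) / s := by
    field_simp
    linear_combination hker - (1 + s ^ 4) * CharTwo.two_eq_zero (R := F)
  have hs : s ^ 2 ^ n = s := relTrace_pow_self (hfix x)
  have huq : u ^ 2 ^ n = u := by
    apply pow_injective_of_coprime_card_sub_one three_ne_zero h3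
    simp only
    rw [← pow_mul, mul_comm, pow_mul, hu3, div_pow, add_pow_char_pow, one_pow, ← pow_mul,
      mul_comm, pow_mul, hs]
  rw [relTrace_of_pow_eq huq] at hu
  exact hu0 (by linear_combination hu - u * CharTwo.two_eq_zero (R := F))

lemma not_injective_relTraceMap (hF : Fintype.card F = (2 ^ n) ^ 3) (h3 : 2 ^ n % 3 = 1) :
    ¬ Function.Injective (relTraceMap (2 ^ n) : F → F) := by
  obtain ⟨w, hw3, hw⟩ := exists_pow_three_pow_eq_and_pow_ne hF h3
  have hw0 : w ≠ 0 := by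
    rintro rfl
    exact hw (zero_pow (by positivity))
  have ha1 : 1 + w ^ 3 ≠ 0 := by
    intro h
    apply hw
    have : w ^ 3 = 1 := by linear_combination h - CharTwo.two_eq_zero (R := F)
    rw [← Nat.div_add_mod (2 ^ n) 3, h3, pow_add, pow_mul, this, one_pow, one_mul, pow_one]
  set s := (1 + w ^ 3)⁻¹
  have hs : s ^ 2 ^ n = s := by rw [inv_pow, add_pow_char_pow, one_pow, hw3]
  have hs0 : s ≠ 0 := inv_ne_zero ha1
  have hsa : (s * (1 + w ^ 3)) ^ 4 = 1 := by rw [inv_mul_cancel₀ ha1, one_pow]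
  set u := w ^ 3 * s * w
  have hu0 : u ≠ 0 := mul_ne_zero (mul_ne_zero (pow_ne_zero 3 hw0) hs0) hw0
  have hTu : relTrace (2 ^ n) u = 0 := by
    rw [relTrace_mul_of_pow_eq (by rw [mul_pow, hw3, hs]), relTrace_eq_zero_of_pow_three h3 hw3 hw,
      mul_zero]
  obtain ⟨x, hx⟩ := relTrace_surjective hF hs
  -- with `a = w ^ 3`: `1 + s ^ 4 + s * u ^ 3 = 1 + (s * (1 + a)) ^ 4 = 2`
  have hker : 1 + relTrace (2 ^ n) x ^ 4 + relTrace (2 ^ n) x * u ^ 3 = 0 := by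
    rw [hx]
    linear_combination (-s ^ 4) * add_pow_four 1 (w ^ 3) + hsa + CharTwo.two_eq_zero (R := F)
  intro hinj
  apply hu0
  simpa using hinj (show relTraceMap (2 ^ n) (x + u) = relTraceMap (2 ^ n) x by
    rw [relTraceMap_add hTu, hker, mul_zero, add_zero])

end CharTwo

end FqCubed

open FqCubed

theorem stmt_1_general (m : ℕ) (q : ℕ) (hq : q = 2 ^ m)
    (F : Type*) [Field F] [Fintype F] (hF : Fintype.card F = q ^ 3) :
    Function.Bijective
      (fun x : F => x + x ^ (4 * q ^ 2 + 1) + x ^ (q + 4) + x ^ (q ^ 2 + 4) + x ^ (4 * q + 1))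
      ↔ Odd m := by
  subst hq
  have : CharP F 2 := charP_of_card_eq_prime_pow (f := m * 3) (by rw [hF, pow_mul])
  simp only [relTraceMap_eq, ← Finite.injective_iff_bijective]
  constructor
  · intro hinj
    by_contra hodd
    exact not_injective_relTraceMap hF
      (two_pow_mod_three_eq_one_iff.mpr (Nat.not_odd_iff_even.mp hodd)) hinj
  · intro hodd
    refine relTraceMap_injective hF ((Nat.Prime.coprime_iff_not_dvd Nat.prime_three).mpr ?_)
    have : 2 ^ (m * 3) % 3 ≠ 1 := by
      rw [Ne, two_pow_mod_three_eq_one_iff, Nat.not_even_iff_odd]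
      exact hodd.mul (by decide)
    have := Nat.one_le_two_pow (n := m * 3)
    rw [hF, ← pow_mul]
    omega

theorem stmt_1 (m : ℕ) (hm : 0 < m) (q : ℕ) (hq : q = 2 ^ m)
    (F : Type*) [Field F] [Fintype F] (hF : Fintype.card F = q ^ 3) :
    Function.Bijective
      (fun x : F => x + x ^ (4 * q ^ 2 + 1) + x ^ (q + 4) + x ^ (q ^ 2 + 4) + x ^ (4 * q + 1))
      ↔ Odd m :=
  stmt_1_general m q hq F hF
end

section
/- Let q = 2^m for a positive integer m. Then the polynomial f(x) = x + x^{q^2+2} + x^{2q+1} + x^3 + x^{3q} is a permutation polynomial of F_{q^3} if and only if m is odd. -/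
theorem two_pow_mod_three (k : ℕ) : 2 ^ k % 3 = if Even k then 1 else 2 := by
  induction k with
  | zero => simp
  | succ n ih =>
    rw [pow_succ, Nat.mul_mod, ih]
    by_cases h : Even n <;> simp [h, Nat.even_add_one]

set_option maxHeartbeats 1600000 in
theorem stmt_2 (m : ℕ) (hm : 0 < m) (q : ℕ) (hq : q = 2 ^ m)
    (F : Type*) [Field F] [Fintype F] (hF : Fintype.card F = q ^ 3) :
    Function.Bijective
      (fun x : F => x + x ^ (q ^ 2 + 2) + x ^ (2 * q + 1) + x ^ 3 + x ^ (3 * q))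
      ↔ Odd m := by
  classical
  have hchar : CharP F 2 := by
    have hp : (ringChar F).Prime := CharP.char_is_prime F (ringChar F)
    obtain ⟨n, -, hcard⟩ := FiniteField.card F (ringChar F)
    have hdvd : ringChar F ∣ q ^ 3 := by
      rw [← hF, hcard]; exact dvd_pow_self _ (by positivity)
    have h2d : ringChar F ∣ 2 ^ (m * 3) := by rwa [hq, ← pow_mul] at hdvd
    have : ringChar F = 2 :=
      (Nat.prime_dvd_prime_iff_eq hp Nat.prime_two).mp (hp.dvd_of_dvd_pow h2d)
    exact this ▸ ringChar.charP F
  haveI := hchar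
  constructor
  · intro hbij
    by_contra hoddm
    have hev : Even m := Nat.not_odd_iff_even.mp hoddm
    have h2 : (2 : F) = 0 := CharP.cast_eq_zero F 2
    have hadd : ∀ a b : F, (a + b) ^ q = a ^ q + b ^ q := by
      intro a b; rw [hq]; exact add_pow_char_pow ..
    have hq2 : 2 ≤ q := by rw [hq]; calc 2 = 2^1 := rfl
                                         _ ≤ 2^m := Nat.pow_le_pow_right (by norm_num) hm
    have hqm : q % 3 = 1 := by rw [hq, two_pow_mod_three, if_pos hev]
    have hqm2 : q^2 % 3 = 1 := by
      rw [hq, ← pow_mul, two_pow_mod_three, if_pos ⟨m, by ring⟩]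
    have h3k : 3 ∣ q^2 + q + 1 := by omega
    obtain ⟨k, hk⟩ := h3k
    have hfact : (q-1)*(q^2+q+1) + 1 = q^3 := by
      zify [show 1 ≤ q by omega]; ring
    obtain ⟨g, hg⟩ := IsCyclic.exists_generator (α := Fˣ)
    have hog : orderOf g = q^3 - 1 := by
      rw [orderOf_eq_card_of_forall_mem_zpowers hg, Nat.card_units, Nat.card_eq_fintype_card, hF]
    obtain ⟨K, hKdef⟩ : ∃ K, K = k*(q-1) := ⟨_, rfl⟩
    have hA : 3*K + 1 = q^3 := by
      rw [hKdef, show 3*(k*(q-1)) = (q-1)*(3*k) by ring, ← hk]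
      exact hfact
    set ω : Fˣ := g ^ K with hωdef
    have hω3 : ω^3 = 1 := by
      rw [hωdef, ← pow_mul, show K*3 = q^3-1 by omega, ← hog]
      exact pow_orderOf_eq_one g
    have hq8 : 2^3 ≤ q^3 := Nat.pow_le_pow_left hq2 3
    have hωne : ω ≠ 1 := by
      intro h
      have hdvd := orderOf_dvd_of_pow_eq_one h
      rw [hog] at hdvd
      have := Nat.le_of_dvd (by omega) hdvd
      omega
    set w : F := ((ω : Fˣ) : F) with hwdef
    set e : F := ((g : Fˣ) : F)^k with hedef
    have he0 : e ≠ 0 := pow_ne_zero _ (Units.ne_zero g)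
    have hew : e^(q-1) = w := by
      rw [hedef, hwdef, hωdef, hKdef, ← pow_mul]
      push_cast [Units.val_pow_eq_pow_val]
      ring
    have heq : e^q = w*e := by
      rw [← hew, ← pow_succ]
      congr 1
      omega
    have hw3 : w^3 = 1 := by
      rw [hwdef, ← Units.val_pow_eq_pow_val, hω3, Units.val_one]
    have hwne1 : w ≠ 1 := fun h => hωne (Units.ext h)
    have hω2 : w^2 + w + 1 = 0 := by
      have hfac : (w+1)*(w^2+w+1) = 0 := by linear_combination hw3 + (w^2+w+1)*h2
      rcases mul_eq_zero.mp hfac with h | h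
      · exact absurd (by linear_combination h - h2 : w = 1) hwne1
      · exact h
    have hwq : w^q = w := by
      obtain ⟨j, hj⟩ : ∃ j, q = 3*j+1 := ⟨(q-1)/3, by omega⟩
      rw [hj, pow_succ, pow_mul, hw3, one_pow, one_mul]
    have hx1q : (1+e)^q = 1 + w*e := by rw [hadd, one_pow, heq]
    have hx1qq : ((1+e)^q)^q = 1 + w*(w*e) := by
      rw [hx1q, hadd, one_pow, mul_pow, hwq, heq]
    have hrw : ∀ x : F, x + x^(q^2+2) + x^(2*q+1) + x^3 + x^(3*q)
        = x + ((x^q)^q)*x^2 + (x^q)^2*x + x^3 + (x^q)^3 := by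
      intro x
      rw [pow_add, show q^2 = q*q from sq q, pow_mul, pow_succ x (2*q),
        show 2*q = q*2 from mul_comm 2 q, pow_mul, show 3*q = q*3 from mul_comm 3 q, pow_mul]
    have hc1 : (fun x : F => x + x ^ (q ^ 2 + 2) + x ^ (2 * q + 1) + x ^ 3 + x ^ (3 * q)) (1+e)
        = (fun x : F => x + x ^ (q ^ 2 + 2) + x ^ (2 * q + 1) + x ^ 3 + x ^ (3 * q)) 1 := by
      simp only
      rw [hrw, hrw, hx1qq, hx1q, one_pow, one_pow, one_pow]
      linear_combination (e + 6*e^2 + e^3 + w*e^3)*hω2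
        + (3*e - e^2 + 2*w*e - 2*w*e^2 - w*e^3)*h2
    have h1e : (1+e : F) = 1 := hbij.injective hc1
    exact he0 (by linear_combination h1e)
  · intro hodd
    have h2 : (2 : F) = 0 := CharP.cast_eq_zero F 2
    have hadd : ∀ a b : F, (a + b) ^ q = a ^ q + b ^ q := by
      intro a b; rw [hq]; exact add_pow_char_pow ..
    have hq2 : 2 ≤ q := by
      rw [hq]
      calc 2 = 2^1 := rfl
      _ ≤ 2^m := Nat.pow_le_pow_right (by norm_num) hm
    have hq8 : 2^3 ≤ q^3 := Nat.pow_le_pow_left hq2 3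
    have hcube : ∀ a : F, ((a ^ q) ^ q) ^ q = a := by
      intro a
      rw [← pow_mul, ← pow_mul, show q * (q * q) = q ^ 3 by ring, ← hF, FiniteField.pow_card]
    have hq3m : q^3 % 3 = 2 := by
      rw [hq, ← pow_mul, two_pow_mod_three, if_neg]
      rw [Nat.even_mul]
      rintro (h | h)
      · exact (Nat.not_even_iff_odd.mpr hodd) h
      · exact absurd h (by decide)
    have hno : ∀ ν : F, ν^2 + ν + 1 ≠ 0 := by
      intro ν hν
      have hν0 : ν ≠ 0 := by
        rintro rfl
        rw [show (0:F)^2+0+1 = 1 by ring] at hν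
        exact one_ne_zero hν
      have hν3 : ν^3 = 1 := by linear_combination (ν+1)*hν - (ν^2+ν+1)*h2
      set u : Fˣ := Units.mk0 ν hν0 with hu
      have hu3 : u^3 = 1 := by
        ext
        rw [Units.val_pow_eq_pow_val, hu, Units.val_mk0, Units.val_one]
        exact hν3
      have hdvd3 := orderOf_dvd_of_pow_eq_one hu3
      have hdvdc : orderOf u ∣ q^3 - 1 := by
        rw [← hF, ← Fintype.card_units]
        exact orderOf_dvd_card
      rcases (Nat.Prime.eq_one_or_self_of_dvd Nat.prime_three _ hdvd3) with ho | ho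
      · have hu1 : u = 1 := orderOf_eq_one_iff.mp ho
        have : ν = 1 := by rw [← Units.val_mk0 (a := ν) hν0, ← hu, hu1, Units.val_one]
        rw [this] at hν
        have : (1:F) = 0 := by linear_combination hν - h2
        exact one_ne_zero this
      · rw [ho] at hdvdc
        omega
    rw [← Finite.injective_iff_bijective]
    intro x1 x2 hfe0
    have h : x1 + x1 ^ (q ^ 2 + 2) + x1 ^ (2 * q + 1) + x1 ^ 3 + x1 ^ (3 * q)
        = x2 + x2 ^ (q ^ 2 + 2) + x2 ^ (2 * q + 1) + x2 ^ 3 + x2 ^ (3 * q) := hfe0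
    have hrw : ∀ x : F, x + x^(q^2+2) + x^(2*q+1) + x^3 + x^(3*q)
        = x + (x^q)^q*x^2 + (x^q)^2*x + x^3 + (x^q)^3 := by
      intro x
      rw [pow_add, show q^2 = q*q from sq q, pow_mul, pow_succ x (2*q),
        show 2*q = q*2 from mul_comm 2 q, pow_mul, show 3*q = q*3 from mul_comm 3 q, pow_mul]
    obtain ⟨y1, hxq1⟩ : ∃ Y : F, x1^q = Y := ⟨_, rfl⟩
    obtain ⟨z1, hyq1⟩ : ∃ Z : F, y1^q = Z := ⟨_, rfl⟩
    obtain ⟨y2, hxq2⟩ : ∃ Y : F, x2^q = Y := ⟨_, rfl⟩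
    obtain ⟨z2, hyq2⟩ : ∃ Z : F, y2^q = Z := ⟨_, rfl⟩
    have hzq1 : z1^q = x1 := by
      have := hcube x1
      rw [hxq1, hyq1] at this
      exact this
    have hzq2 : z2^q = x2 := by
      have := hcube x2
      rw [hxq2, hyq2] at this
      exact this
    rw [hrw x1, hrw x2, hxq1, hyq1, hxq2, hyq2] at h
    have hEshift : ∀ X Y Z : F, X^q = Y → Y^q = Z → Z^q = X →
        (X + Z*X^2 + Y^2*X + X^3 + Y^3)^q = Y + X*Y^2 + Z^2*Y + Y^3 + Z^3 := by
      intro X Y Z e1 e2 e3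
      rw [hadd, hadd, hadd, hadd, mul_pow, mul_pow, pow_right_comm X 2 q, pow_right_comm Y 2 q,
        pow_right_comm X 3 q, pow_right_comm Y 3 q, e1, e2, e3]
    have hfe2 : y1 + x1*y1^2 + z1^2*y1 + y1^3 + z1^3 = y2 + x2*y2^2 + z2^2*y2 + y2^3 + z2^3 := by
      rw [← hEshift x1 y1 z1 hxq1 hyq1 hzq1, ← hEshift x2 y2 z2 hxq2 hyq2 hzq2, h]
    have hfe3 : z1 + y1*z1^2 + x1^2*z1 + z1^3 + x1^3 = z2 + y2*z2^2 + x2^2*z2 + z2^3 + x2^3 := by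
      rw [← hEshift y1 z1 x1 hyq1 hzq1 hxq1, ← hEshift y2 z2 x2 hyq2 hzq2 hxq2, hfe2]
    have ha : x1 + y1 + z1 = x2 + y2 + z2 := by
      linear_combination h + hfe2 + hfe3 - (z1^3 + y1*z1^2 + y1^3 + x1*y1^2 + x1^2*z1 + x1^3)*h2 + (z2^3 + y2*z2^2 + y2^3 + x2*y2^2 + x2^2*z2 + x2^3)*h2
    have hCn1 : (x1 + z1*x1^2 + y1^2*x1 + x1^3 + y1^3)^2 + (y1 + x1*y1^2 + z1^2*y1 + y1^3 + z1^3)^2 + (z1 + y1*z1^2 + x1^2*z1 + z1^3 + x1^3)^2 + (x1 + z1*x1^2 + y1^2*x1 + x1^3 + y1^3)*(y1 + x1*y1^2 + z1^2*y1 + y1^3 + z1^3) + (y1 + x1*y1^2 + z1^2*y1 + y1^3 + z1^3)*(z1 + y1*z1^2 + x1^2*z1 + z1^3 + x1^3) + (z1 + y1*z1^2 + x1^2*z1 + z1^3 + x1^3)*(x1 + z1*x1^2 + y1^2*x1 + x1^3 + y1^3) = (x1^2 + y1^2 + z1^2 + x1*y1 + y1*z1 + z1*x1)*((1 + (x1 +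 y1 + z1)^2)^2 + (1 + (x1 + y1 + z1)^2)*(x1^2 + y1^2 + z1^2 + x1*y1 + y1*z1 + z1*x1) + (x1^2 + y1^2 + z1^2 + x1*y1 + y1*z1 + z1*x1)^2) := by
      linear_combination ((-1)*y1*z1^3 + (-3)*y1*z1^5 + (-4)*y1^2*z1^2 + (-11)*y1^2*z1^4 + (-3)*y1^3*z1 + (-13)*y1^3*z1^3 + (-10)*y1^4*z1^2 + (-6)*y1^5*z1 + (-3)*x1*z1^3 + (-6)*x1*z1^5 + (-8)*x1*y1*z1^2 + (-22)*x1*y1*z1^4 + (-8)*x1*y1^2*z1 + (-36)*x1*y1^2*z1^3 + (-1)*x1*y1^3 + (-36)*x1*y1^3*z1^2 + (-22)*x1*y1^4*z1 + (-3)*x1*y1^5 + (-4)*x1^2*z1^2 + (-10)*x1^2*z1^4 + (-8)*x1^2*y1*z1 + (-36)*x1^2*y1*z1^3 + (-4)*x1^2*y1^2 + (-54)*x1^2*y1^2*z1^2 + (-36)*x1^2*y1^3*z1 + (-11)*x1^2*y1^4 + (-1)*x1^3*z1 + (-13)*x1^3*z1^3 + (-3)*x1^3*y1 + (-36)*x1^3*y1*z1^2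 + (-36)*x1^3*y1^2*z1 + (-13)*x1^3*y1^3 + (-11)*x1^4*z1^2 + (-22)*x1^4*y1*z1 + (-10)*x1^4*y1^2 + (-3)*x1^5*z1 + (-6)*x1^5*y1)*h2
    have hCn2 : (x2 + z2*x2^2 + y2^2*x2 + x2^3 + y2^3)^2 + (y2 + x2*y2^2 + z2^2*y2 + y2^3 + z2^3)^2 + (z2 + y2*z2^2 + x2^2*z2 + z2^3 + x2^3)^2 + (x2 + z2*x2^2 + y2^2*x2 + x2^3 + y2^3)*(y2 + x2*y2^2 + z2^2*y2 + y2^3 + z2^3) + (y2 + x2*y2^2 + z2^2*y2 + y2^3 + z2^3)*(z2 + y2*z2^2 + x2^2*z2 + z2^3 + x2^3) + (z2 + y2*z2^2 + x2^2*z2 + z2^3 + x2^3)*(x2 + z2*x2^2 + y2^2*x2 + x2^3 + y2^3) = (x2^2 + y2^2 + z2^2 + x2*y2 + y2*z2 + z2*x2)*((1 + (x2 + y2 + z2)^2)^2 + (1 + (x2 + y2 + z2)^2)*(x2^2 + y2^2 + z2^2 + x2*y2 + y2*z2 + z2*x2) + (x2^2 + y2^2 + z2^2 + x2*y2 + y2*z2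 + z2*x2)^2) := by
      linear_combination ((-1)*y2*z2^3 + (-3)*y2*z2^5 + (-4)*y2^2*z2^2 + (-11)*y2^2*z2^4 + (-3)*y2^3*z2 + (-13)*y2^3*z2^3 + (-10)*y2^4*z2^2 + (-6)*y2^5*z2 + (-3)*x2*z2^3 + (-6)*x2*z2^5 + (-8)*x2*y2*z2^2 + (-22)*x2*y2*z2^4 + (-8)*x2*y2^2*z2 + (-36)*x2*y2^2*z2^3 + (-1)*x2*y2^3 + (-36)*x2*y2^3*z2^2 + (-22)*x2*y2^4*z2 + (-3)*x2*y2^5 + (-4)*x2^2*z2^2 + (-10)*x2^2*z2^4 + (-8)*x2^2*y2*z2 + (-36)*x2^2*y2*z2^3 + (-4)*x2^2*y2^2 + (-54)*x2^2*y2^2*z2^2 + (-36)*x2^2*y2^3*z2 + (-11)*x2^2*y2^4 + (-1)*x2^3*z2 + (-13)*x2^3*z2^3 + (-3)*x2^3*y2 + (-36)*x2^3*y2*z2^2 + (-36)*x2^3*y2^2*z2 + (-13)*x2^3*y2^3 + (-11)*x2^4*z2^2 + (-22)*x2^4*y2*z2 + (-10)*x2^4*y2^2 + (-3)*x2^5*z2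 + (-6)*x2^5*y2)*h2
    have hNeq : (x1 + z1*x1^2 + y1^2*x1 + x1^3 + y1^3)^2 + (y1 + x1*y1^2 + z1^2*y1 + y1^3 + z1^3)^2 + (z1 + y1*z1^2 + x1^2*z1 + z1^3 + x1^3)^2 + (x1 + z1*x1^2 + y1^2*x1 + x1^3 + y1^3)*(y1 + x1*y1^2 + z1^2*y1 + y1^3 + z1^3) + (y1 + x1*y1^2 + z1^2*y1 + y1^3 + z1^3)*(z1 + y1*z1^2 + x1^2*z1 + z1^3 + x1^3) + (z1 + y1*z1^2 + x1^2*z1 + z1^3 + x1^3)*(x1 + z1*x1^2 + y1^2*x1 + x1^3 + y1^3) = (x2 + z2*x2^2 + y2^2*x2 + x2^3 + y2^3)^2 + (y2 + x2*y2^2 + z2^2*y2 + y2^3 + z2^3)^2 + (z2 + y2*z2^2 + x2^2*z2 + z2^3 + x2^3)^2 + (x2 + z2*x2^2 + y2^2*x2 + x2^3 + y2^3)*(y2 + x2*y2^2 + z2^2*y2 + y2^3 + z2^3) + (y2 + x2*y2^2 + z2^2*y2 + y2^3 + z2^3)*(z2 + y2*z2^2 + x2^2*z2 + z2^3 + x2^3)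 + (z2 + y2*z2^2 + x2^2*z2 + z2^3 + x2^3)*(x2 + z2*x2^2 + y2^2*x2 + x2^3 + y2^3) := by rw [h, hfe2, hfe3]
    have hhn : (x1^2 + y1^2 + z1^2 + x1*y1 + y1*z1 + z1*x1)*((1 + (x1 + y1 + z1)^2)^2 + (1 + (x1 + y1 + z1)^2)*(x1^2 + y1^2 + z1^2 + x1*y1 + y1*z1 + z1*x1) + (x1^2 + y1^2 + z1^2 + x1*y1 + y1*z1 + z1*x1)^2) = (x2^2 + y2^2 + z2^2 + x2*y2 + y2*z2 + z2*x2)*((1 + (x2 + y2 + z2)^2)^2 + (1 + (x2 + y2 + z2)^2)*(x2^2 + y2^2 + z2^2 + x2*y2 + y2*z2 + z2*x2) + (x2^2 + y2^2 + z2^2 + x2*y2 + y2*z2 + z2*x2)^2) := by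
      rw [← hCn1, ← hCn2]
      exact hNeq
    rw [← ha] at hhn
    have hn12 : (x1^2 + y1^2 + z1^2 + x1*y1 + y1*z1 + z1*x1) = (x2^2 + y2^2 + z2^2 + x2*y2 + y2*z2 + z2*x2) := by
      by_contra hne
      have hs0 : (x1^2 + y1^2 + z1^2 + x1*y1 + y1*z1 + z1*x1) + (x2^2 + y2^2 + z2^2 + x2*y2 + y2*z2 + z2*x2) ≠ 0 := fun hh => hne (by linear_combination hh - (x2^2 + y2^2 + z2^2 + x2*y2 + y2*z2 + z2*x2)*h2)
      have hQ : ((x1^2 + y1^2 + z1^2 + x1*y1 + y1*z1 + z1*x1) + (x2^2 + y2^2 + z2^2 + x2*y2 + y2*z2 + z2*x2))*((x1^2 + y1^2 + z1^2 + x1*y1 + y1*z1 + z1*x1)^2 + (x1^2 + y1^2 + z1^2 + x1*y1 + y1*z1 + z1*x1)*(x2^2 + y2^2 + z2^2 + x2*y2 + y2*z2 + z2*x2) + (x2^2 + y2^2 + z2^2 + x2*y2 + y2*z2 + z2*x2)^2 + (1 + (x1 + y1 + z1)^2)*(x1^2 + y1^2 + z1^2 + x1*y1 + y1*z1 + z1*x1)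 + (1 + (x1 + y1 + z1)^2)*(x2^2 + y2^2 + z2^2 + x2*y2 + y2*z2 + z2*x2) + (1 + (x1 + y1 + z1)^2)^2) = 0 := by
        linear_combination hhn + ((x2^2 + y2^2 + z2^2 + x2*y2 + y2*z2 + z2*x2)^3 + (x1^2 + y1^2 + z1^2 + x1*y1 + y1*z1 + z1*x1)^2*(x2^2 + y2^2 + z2^2 + x2*y2 + y2*z2 + z2*x2) + (x1^2 + y1^2 + z1^2 + x1*y1 + y1*z1 + z1*x1)*(x2^2 + y2^2 + z2^2 + x2*y2 + y2*z2 + z2*x2)^2 + (1 + (x1 + y1 + z1)^2)*(x2^2 + y2^2 + z2^2 + x2*y2 + y2*z2 + z2*x2)^2 + (1 + (x1 + y1 + z1)^2)*(x1^2 + y1^2 + z1^2 + x1*y1 + y1*z1 + z1*x1)*(x2^2 + y2^2 + z2^2 + x2*y2 + y2*z2 + z2*x2) + (1 + (x1 + y1 + z1)^2)^2*(x2^2 + y2^2 + z2^2 + x2*y2 + y2*z2 + z2*x2))*h2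
      have hQ0 : (x1^2 + y1^2 + z1^2 + x1*y1 + y1*z1 + z1*x1)^2 + (x1^2 + y1^2 + z1^2 + x1*y1 + y1*z1 + z1*x1)*(x2^2 + y2^2 + z2^2 + x2*y2 + y2*z2 + z2*x2) + (x2^2 + y2^2 + z2^2 + x2*y2 + y2*z2 + z2*x2)^2 + (1 + (x1 + y1 + z1)^2)*(x1^2 + y1^2 + z1^2 + x1*y1 + y1*z1 + z1*x1) + (1 + (x1 + y1 + z1)^2)*(x2^2 + y2^2 + z2^2 + x2*y2 + y2*z2 + z2*x2) + (1 + (x1 + y1 + z1)^2)^2 = 0 :=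
        (mul_eq_zero.mp hQ).resolve_left hs0
      have h15 : ((x1^2 + y1^2 + z1^2 + x1*y1 + y1*z1 + z1*x1) + (1 + (x1 + y1 + z1)^2))^2 + ((x1^2 + y1^2 + z1^2 + x1*y1 + y1*z1 + z1*x1) + (1 + (x1 + y1 + z1)^2))*((x1^2 + y1^2 + z1^2 + x1*y1 + y1*z1 + z1*x1) + (x2^2 + y2^2 + z2^2 + x2*y2 + y2*z2 + z2*x2)) + ((x1^2 + y1^2 + z1^2 + x1*y1 + y1*z1 + z1*x1) + (x2^2 + y2^2 + z2^2 + x2*y2 + y2*z2 + z2*x2))^2 = 0 := by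
        linear_combination hQ0 + ((x1^2 + y1^2 + z1^2 + x1*y1 + y1*z1 + z1*x1)*((x1^2 + y1^2 + z1^2 + x1*y1 + y1*z1 + z1*x1) + (x2^2 + y2^2 + z2^2 + x2*y2 + y2*z2 + z2*x2) + (1 + (x1 + y1 + z1)^2)))*h2
      have hi : ((x1^2 + y1^2 + z1^2 + x1*y1 + y1*z1 + z1*x1) + (x2^2 + y2^2 + z2^2 + x2*y2 + y2*z2 + z2*x2)) * ((x1^2 + y1^2 + z1^2 + x1*y1 + y1*z1 + z1*x1) + (x2^2 + y2^2 + z2^2 + x2*y2 + y2*z2 + z2*x2))⁻¹ = 1 := mul_inv_cancel₀ hs0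
      refine hno (((x1^2 + y1^2 + z1^2 + x1*y1 + y1*z1 + z1*x1) + (1 + (x1 + y1 + z1)^2))*((x1^2 + y1^2 + z1^2 + x1*y1 + y1*z1 + z1*x1) + (x2^2 + y2^2 + z2^2 + x2*y2 + y2*z2 + z2*x2))⁻¹) ?_
      linear_combination (((x1^2 + y1^2 + z1^2 + x1*y1 + y1*z1 + z1*x1) + (x2^2 + y2^2 + z2^2 + x2*y2 + y2*z2 + z2*x2))⁻¹)^2 * h15 + (-(((x1^2 + y1^2 + z1^2 + x1*y1 + y1*z1 + z1*x1) + (1 + (x1 + y1 + z1)^2))*((x1^2 + y1^2 + z1^2 + x1*y1 + y1*z1 + z1*x1) + (x2^2 + y2^2 + z2^2 + x2*y2 + y2*z2 + z2*x2))⁻¹) - ((x1^2 + y1^2 + z1^2 + x1*y1 + y1*z1 + z1*x1) + (x2^2 + y2^2 + z2^2 + x2*y2 + y2*z2 + z2*x2))*((x1^2 + y1^2 + z1^2 + x1*y1 + y1*z1 + z1*x1) + (x2^2 + y2^2 + z2^2 + x2*y2 + y2*z2 + z2*x2))⁻¹ - 1) * hi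
    have hB1 : x1 + z1*x1^2 + y1^2*x1 + x1^3 + y1^3 = (x1 + y1 + z1) + ((1 + (x1 + y1 + z1)^2))*(x1 + (x1 + y1 + z1)) + (x1^2 + y1^2 + z1^2 + x1*y1 + y1*z1 + z1*x1)*(x1 + z1) := by
      linear_combination ((-1)*z1 + (-1)*z1^3 + (-1)*y1 + (-2)*y1*z1^2 + (-2)*y1^2*z1 + (-1)*x1 + (-3)*x1*z1^2 + (-5)*x1*y1*z1 + (-2)*x1*y1^2 + (-3)*x1^2*z1 + (-3)*x1^2*y1 + (-1)*x1^3)*h2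
    have hB2 : x2 + z2*x2^2 + y2^2*x2 + x2^3 + y2^3 = (x2 + y2 + z2) + (1 + (x2 + y2 + z2)^2)*(x2 + (x2 + y2 + z2)) + (x2^2 + y2^2 + z2^2 + x2*y2 + y2*z2 + z2*x2)*(x2 + z2) := by
      linear_combination ((-1)*z2 + (-1)*z2^3 + (-1)*y2 + (-2)*y2*z2^2 + (-2)*y2^2*z2 + (-1)*x2 + (-3)*x2*z2^2 + (-5)*x2*y2*z2 + (-2)*x2*y2^2 + (-3)*x2^2*z2 + (-3)*x2^2*y2 + (-1)*x2^3)*h2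
    rw [← ha, ← hn12] at hB2
    rw [hB1, hB2] at h
    have hkey : (1 + (x1 + y1 + z1)^2)*(x1 + x2) + (x1^2 + y1^2 + z1^2 + x1*y1 + y1*z1 + z1*x1)*((x1 + x2) + (z1 + z2)) = 0 := by
      linear_combination h + ((1 + (x1 + y1 + z1)^2)*x2 + (x1^2 + y1^2 + z1^2 + x1*y1 + y1*z1 + z1*x1)*x2 + (x1^2 + y1^2 + z1^2 + x1*y1 + y1*z1 + z1*x1)*z2)*h2
    have hNq : (x1^2 + y1^2 + z1^2 + x1*y1 + y1*z1 + z1*x1)^q = x1^2 + y1^2 + z1^2 + x1*y1 + y1*z1 + z1*x1 := by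
      rw [hadd, hadd, hadd, hadd, hadd, mul_pow, mul_pow, mul_pow, pow_right_comm x1 2 q,
        pow_right_comm y1 2 q, pow_right_comm z1 2 q, hxq1, hyq1, hzq1]
      ring
    have hTq : (1 + (x1 + y1 + z1)^2)^q = 1 + (x1 + y1 + z1)^2 := by
      rw [hadd, one_pow, pow_right_comm (x1 + y1 + z1) 2 q, hadd, hadd, hxq1, hyq1, hzq1]
      ring
    by_cases hn0 : (x1^2 + y1^2 + z1^2 + x1*y1 + y1*z1 + z1*x1) = 0
    · have hn0' : x2^2 + y2^2 + z2^2 + x2*y2 + y2*z2 + z2*x2 = 0 := by rw [← hn12]; exact hn0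
      have h61 : (x1 + y1)^2 + (x1 + y1)*(y1 + z1) + (y1 + z1)^2 = 0 := by
        linear_combination hn0 + (y1*z1 + y1^2 + x1*y1)*h2
      have h62 : (x2 + y2)^2 + (x2 + y2)*(y2 + z2) + (y2 + z2)^2 = 0 := by
        linear_combination hn0' + (y2*z2 + y2^2 + x2*y2)*h2
      have hy1x1 : y1 = x1 := by
        by_cases hu0 : x1 + y1 = 0
        · linear_combination hu0 - x1*h2
        · exfalso
          have hiu : (x1 + y1)*(x1 + y1)⁻¹ = 1 := mul_inv_cancel₀ hu0
          refine hno ((y1 + z1)*(x1 + y1)⁻¹) ?_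
          linear_combination ((x1 + y1)⁻¹)^2 * h61 + (-((y1 + z1)*(x1 + y1)⁻¹) - ((x1 + y1)*(x1 + y1)⁻¹) - 1) * hiu
      have hy2x2 : y2 = x2 := by
        by_cases hu0 : x2 + y2 = 0
        · linear_combination hu0 - x2*h2
        · exfalso
          have hiu : (x2 + y2)*(x2 + y2)⁻¹ = 1 := mul_inv_cancel₀ hu0
          refine hno ((y2 + z2)*(x2 + y2)⁻¹) ?_
          linear_combination ((x2 + y2)⁻¹)^2 * h62 + (-((y2 + z2)*(x2 + y2)⁻¹) - ((x2 + y2)*(x2 + y2)⁻¹) - 1) * hiu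
      have hz1x1 : z1 = x1 := by
        rw [← hyq1, hy1x1, hxq1]
        exact hy1x1
      have hz2x2 : z2 = x2 := by
        rw [← hyq2, hy2x2, hxq2]
        exact hy2x2
      rw [hy1x1, hz1x1, hy2x2, hz2x2] at ha
      linear_combination ha + (x2 - x1)*h2
    · by_cases hd0 : x1 + x2 = 0
      · linear_combination hd0 - x2*h2
      · exfalso
        have hNz : (x1^2 + y1^2 + z1^2 + x1*y1 + y1*z1 + z1*x1)*(z1 + z2) = ((1 + (x1 + y1 + z1)^2) + (x1^2 + y1^2 + z1^2 + x1*y1 + y1*z1 + z1*x1))*(x1 + x2) := by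
          linear_combination - hkey + ((x1^2 + y1^2 + z1^2 + x1*y1 + y1*z1 + z1*x1)*(z1 + z2))*h2
        have hinvN : (x1^2 + y1^2 + z1^2 + x1*y1 + y1*z1 + z1*x1)*(x1^2 + y1^2 + z1^2 + x1*y1 + y1*z1 + z1*x1)⁻¹ = 1 := mul_inv_cancel₀ hn0
        have hrd : z1 + z2 = ((1 + (x1 + y1 + z1)^2) + (x1^2 + y1^2 + z1^2 + x1*y1 + y1*z1 + z1*x1))*(x1^2 + y1^2 + z1^2 + x1*y1 + y1*z1 + z1*x1)⁻¹*(x1 + x2) := by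
          linear_combination (x1^2 + y1^2 + z1^2 + x1*y1 + y1*z1 + z1*x1)⁻¹ * hNz - (z1 + z2)*hinvN
        have hrq : (((1 + (x1 + y1 + z1)^2) + (x1^2 + y1^2 + z1^2 + x1*y1 + y1*z1 + z1*x1))*(x1^2 + y1^2 + z1^2 + x1*y1 + y1*z1 + z1*x1)⁻¹)^q = ((1 + (x1 + y1 + z1)^2) + (x1^2 + y1^2 + z1^2 + x1*y1 + y1*z1 + z1*x1))*(x1^2 + y1^2 + z1^2 + x1*y1 + y1*z1 + z1*x1)⁻¹ := by
          rw [mul_pow, inv_pow, hadd, hTq, hNq]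
        have hdq : (x1 + x2)^q = y1 + y2 := by rw [hadd, hxq1, hxq2]
        have hdqq : (y1 + y2)^q = z1 + z2 := by rw [hadd, hyq1, hyq2]
        have hdqqq : (z1 + z2)^q = x1 + x2 := by rw [hadd, hzq1, hzq2]
        have hcy1 : x1 + x2 = ((1 + (x1 + y1 + z1)^2) + (x1^2 + y1^2 + z1^2 + x1*y1 + y1*z1 + z1*x1))*(x1^2 + y1^2 + z1^2 + x1*y1 + y1*z1 + z1*x1)⁻¹*(y1 + y2) := by
          rw [← hdqqq, hrd, mul_pow, hrq, hdq]
        have hcy2 : y1 + y2 = ((1 + (x1 + y1 + z1)^2) + (x1^2 + y1^2 + z1^2 + x1*y1 + y1*z1 + z1*x1))*(x1^2 + y1^2 + z1^2 + x1*y1 + y1*z1 + z1*x1)⁻¹*(z1 + z2) := by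
          rw [← hdq, hcy1, mul_pow, hrq, hdqq]
        have hz12 : z1 + z2 ≠ 0 := by
          intro hzz
          apply hd0
          rw [← hdqqq, hzz]
          exact zero_pow (by omega)
        have hr3e : z1 + z2 = (((1 + (x1 + y1 + z1)^2) + (x1^2 + y1^2 + z1^2 + x1*y1 + y1*z1 + z1*x1))*(x1^2 + y1^2 + z1^2 + x1*y1 + y1*z1 + z1*x1)⁻¹)^3*(z1 + z2) := by
          calc z1 + z2 = ((1 + (x1 + y1 + z1)^2) + (x1^2 + y1^2 + z1^2 + x1*y1 + y1*z1 + z1*x1))*(x1^2 + y1^2 + z1^2 + x1*y1 + y1*z1 + z1*x1)⁻¹*(x1 + x2) := hrd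
          _ = ((1 + (x1 + y1 + z1)^2) + (x1^2 + y1^2 + z1^2 + x1*y1 + y1*z1 + z1*x1))*(x1^2 + y1^2 + z1^2 + x1*y1 + y1*z1 + z1*x1)⁻¹*(((1 + (x1 + y1 + z1)^2) + (x1^2 + y1^2 + z1^2 + x1*y1 + y1*z1 + z1*x1))*(x1^2 + y1^2 + z1^2 + x1*y1 + y1*z1 + z1*x1)⁻¹*(y1 + y2)) := by rw [← hcy1]
          _ = ((1 + (x1 + y1 + z1)^2) + (x1^2 + y1^2 + z1^2 + x1*y1 + y1*z1 + z1*x1))*(x1^2 + y1^2 + z1^2 + x1*y1 + y1*z1 + z1*x1)⁻¹*(((1 + (x1 + y1 + z1)^2) + (x1^2 + y1^2 + z1^2 + x1*y1 + y1*z1 + z1*x1))*(x1^2 + y1^2 + z1^2 + x1*y1 + y1*z1 + z1*x1)⁻¹*(((1 + (x1 + y1 + z1)^2) + (x1^2 + y1^2 + z1^2 + x1*y1 + y1*z1 + z1*x1))*(x1^2 + y1^2 + z1^2 + x1*y1 + y1*z1 + z1*x1)⁻¹*(z1 + z2))) := by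
              rw [← hcy2]
          _ = (((1 + (x1 + y1 + z1)^2) + (x1^2 + y1^2 + z1^2 + x1*y1 + y1*z1 + z1*x1))*(x1^2 + y1^2 + z1^2 + x1*y1 + y1*z1 + z1*x1)⁻¹)^3*(z1 + z2) := by ring
        have hr30 : ((((1 + (x1 + y1 + z1)^2) + (x1^2 + y1^2 + z1^2 + x1*y1 + y1*z1 + z1*x1))*(x1^2 + y1^2 + z1^2 + x1*y1 + y1*z1 + z1*x1)⁻¹)^3 - 1)*(z1 + z2) = 0 := by linear_combination - hr3e
        have hr3 : (((1 + (x1 + y1 + z1)^2) + (x1^2 + y1^2 + z1^2 + x1*y1 + y1*z1 + z1*x1))*(x1^2 + y1^2 + z1^2 + x1*y1 + y1*z1 + z1*x1)⁻¹)^3 = 1 := by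
          have := (mul_eq_zero.mp hr30).resolve_right hz12
          linear_combination this
        have hre1 : ((1 + (x1 + y1 + z1)^2) + (x1^2 + y1^2 + z1^2 + x1*y1 + y1*z1 + z1*x1))*(x1^2 + y1^2 + z1^2 + x1*y1 + y1*z1 + z1*x1)⁻¹ = 1 := by
          by_contra hr1
          have hfac : (((1 + (x1 + y1 + z1)^2) + (x1^2 + y1^2 + z1^2 + x1*y1 + y1*z1 + z1*x1))*(x1^2 + y1^2 + z1^2 + x1*y1 + y1*z1 + z1*x1)⁻¹ - 1)*((((1 + (x1 + y1 + z1)^2) + (x1^2 + y1^2 + z1^2 + x1*y1 + y1*z1 + z1*x1))*(x1^2 + y1^2 + z1^2 + x1*y1 + y1*z1 + z1*x1)⁻¹)^2 + ((1 + (x1 + y1 + z1)^2) + (x1^2 + y1^2 + z1^2 + x1*y1 + y1*z1 + z1*x1))*(x1^2 + y1^2 + z1^2 + x1*y1 + y1*z1 + z1*x1)⁻¹ + 1) = 0 := by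
            linear_combination hr3
          rcases mul_eq_zero.mp hfac with hc | hc
          · exact hr1 (by linear_combination hc)
          · exact hno _ hc
        have e1 : x1 + x2 = y1 + y2 := by rw [hcy1, hre1, one_mul]
        have e2 : y1 + y2 = z1 + z2 := by rw [hcy2, hre1, one_mul]
        exact hd0 (by linear_combination ha + 2*e1 + e2 + (y2 + z2 - x1)*h2)
end

section
/- Let q = 2^m for a positive integer m. Then the polynomial f(x) = x + x^{2q^2+2q} + x^{2q^2+2} + x^4 + x^{4q} is a permutation polynomial of F_{q^3} if and only if m is not congruent to 1 modulo 3. -/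
set_option maxHeartbeats 2000000 in
theorem stmt_3 (m : ℕ) (hm : 0 < m) (q : ℕ) (hq : q = 2 ^ m)
    (F : Type*) [Field F] [Fintype F] (hF : Fintype.card F = q ^ 3) :
    Function.Bijective
      (fun x : F => x + x ^ (2 * q ^ 2 + 2 * q) + x ^ (2 * q ^ 2 + 2) + x ^ 4 + x ^ (4 * q))
      ↔ m % 3 ≠ 1 := by
  classical
  have h2 : (2 : F) = 0 := by
    have hc := FiniteField.cast_card_eq_zero F
    rw [hF, hq] at hc
    push_cast at hc
    have h0 : ((2:F) ^ m) ^ 3 = 0 := hc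
    have h1 : (2:F) ^ (m*3) = 0 := by rw [pow_mul]; exact h0
    exact pow_eq_zero_iff (by positivity) |>.mp h1
  haveI : CharP F 2 := by
    have hd : ringChar F ∣ 2 := ringChar.dvd (by exact_mod_cast h2)
    have := ((Nat.dvd_prime Nat.prime_two).mp hd).resolve_left CharP.ringChar_ne_one
    rw [← this]; exact ringChar.charP F
  haveI : Fact (Nat.Prime 2) := ⟨Nat.prime_two⟩
  have fr : ∀ a b : F, (a + b) ^ q = a ^ q + b ^ q := by
    intro a b; rw [hq]; exact add_pow_char_pow (x := a) (y := b) 2 m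
  have frsq : ∀ a : F, (a ^ 2) ^ q = (a ^ q) ^ 2 := fun a => pow_right_comm a 2 q
  have hq3 : ∀ x : F, ((x ^ q) ^ q) ^ q = x := by
    intro x
    rw [← pow_mul, ← pow_mul]
    have h : q * (q * q) = q ^ 3 := by ring
    rw [h, ← hF, FiniteField.pow_card]
  have hpm : ∀ k : ℕ, 2 ^ k % 7 = 2 ^ (k % 3) % 7 := by
    intro k
    conv_lhs => rw [← Nat.div_add_mod k 3]
    rw [pow_add, pow_mul, Nat.mul_mod, Nat.pow_mod]
    norm_num [Nat.mod_mod_of_dvd]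
  -- key identity: f x = x + (T x * (x + x^q))^2
  have key : ∀ z : F, z + z ^ (2*q^2+2*q) + z ^ (2*q^2+2) + z ^ 4 + z ^ (4*q)
      = z + ((z + z^q + (z^q)^q) * (z + z^q))^2 := by
    intro z
    have e1 : z ^ (2*q^2+2*q) = ((z^q)^q)^2 * (z^q)^2 := by
      rw [← pow_mul, ← pow_mul, ← pow_mul, ← pow_add]
      congr 1
      ring
    have e2 : z ^ (2*q^2+2) = ((z^q)^q)^2 * z^2 := by
      rw [← pow_mul, ← pow_mul, ← pow_add]
      congr 1
      ring
    have e3 : z ^ (4*q) = (z^q)^4 := by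
      rw [← pow_mul]
      congr 1
      ring
    rw [e1, e2, e3]
    linear_combination (-((z^q)^3*((z^q)^q) + z*(z^q)*((z^q)^q)^2 + 3*z*(z^q)^2*((z^q)^q)
      + 2*z*(z^q)^3 + 3*z^2*(z^q)*((z^q)^q) + 3*z^2*(z^q)^2 + z^3*((z^q)^q) + 2*z^3*(z^q))) * h2
  -- trace of key form
  have stepA : ∀ z : F,
      (z + ((z + z^q + (z^q)^q) * (z + z^q))^2)
      + (z + ((z + z^q + (z^q)^q) * (z + z^q))^2)^q
      + ((z + ((z + z^q + (z^q)^q) * (z + z^q))^2)^q)^q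
      = z + z^q + (z^q)^q := by
    intro z
    simp only [fr, frsq, mul_pow, hq3]
    linear_combination (((z^q)^q)^4 + 3*(z^q)*((z^q)^q)^3 + 4*(z^q)^2*((z^q)^q)^2
      + 3*(z^q)^3*((z^q)^q) + (z^q)^4 + 3*z*((z^q)^q)^3 + 7*z*(z^q)*((z^q)^q)^2
      + 7*z*(z^q)^2*((z^q)^q) + 3*z*(z^q)^3 + 4*z^2*((z^q)^q)^2 + 7*z^2*(z^q)*((z^q)^q)
      + 4*z^2*(z^q)^2 + 3*z^3*((z^q)^q) + 3*z^3*(z^q) + z^4) * h2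
  constructor
  · -- bijective → m % 3 ≠ 1
    intro hbij hm1
    have hq72 : q % 7 = 2 := by
      rw [hq, hpm, hm1]; norm_num
    -- get element of order 7
    have hcard7 : (7 : ℕ) ∣ Fintype.card Fˣ := by
      have hcu : Fintype.card Fˣ = q ^ 3 - 1 := by rw [Fintype.card_units, hF]
      have hq31 : q ^ 3 % 7 = 1 := by
        rw [hq, ← pow_mul, hpm]
        have : m * 3 % 3 = 0 := by omega
        rw [this]; norm_num
      have hq3pos : 0 < q ^ 3 := by rw [hq]; positivity
      omega
    haveI : Fact (Nat.Prime 7) := ⟨by norm_num⟩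
    obtain ⟨g, hg⟩ := exists_prime_orderOf_dvd_card (G := Fˣ) 7 hcard7
    have hv17 : (g : F) ^ 7 = 1 := by
      have := congrArg (Units.val) (pow_orderOf_eq_one g)
      rw [hg] at this
      simpa using this
    have hv1ne : (g : F) ≠ 1 := by
      intro h
      have : g = 1 := Units.ext (by simpa using h)
      rw [this] at hg
      simp at hg
    obtain ⟨v, hv7, hvne1, htr⟩ : ∃ v : F, v^7 = 1 ∧ v ≠ 1 ∧ v + v^2 + v^4 = 0 := by
      set w := (g : F) with hw
      have haa : (w + w^2 + w^4) * ((w + w^2 + w^4) - 1) = 0 := by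
        linear_combination w * hv17 + (w^3+w^5+w^6) * h2
      rcases mul_eq_zero.mp haa with h0 | h1
      · exact ⟨w, hv17, hv1ne, h0⟩
      · have ha1 : w + w^2 + w^4 = 1 := by linear_combination h1
        have h3ne : w^3 ≠ 1 := by
          intro h3
          exact hv1ne (by linear_combination hv17 - (w^4 + w)*h3)
        have hsum : 1 + w + w^2 + w^3 + w^4 + w^5 + w^6 = 0 := by
          have hfac : (w - 1) * (1 + w + w^2 + w^3 + w^4 + w^5 + w^6) = 0 := by
            linear_combination hv17
          rcases mul_eq_zero.mp hfac with h | h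
          · exact absurd (by linear_combination h) hv1ne
          · exact h
        refine ⟨w^3, by rw [← pow_mul, mul_comm, pow_mul, hv17, one_pow], h3ne, ?_⟩
        linear_combination w^5 * hv17 + hsum - ha1 - h2
    have hv0 : v ≠ 0 := by
      intro h
      rw [h] at hv7
      simp at hv7
    have hvq : v ^ q = v ^ 2 := by
      conv_lhs => rw [← Nat.div_add_mod q 7]
      rw [pow_add, pow_mul, hv7, one_pow, one_mul, hq72]
    have e2 : ((1 + v)^q)^q = 1 + v^4 := by
      rw [fr, one_pow, hvq, fr, one_pow, frsq, hvq]
      ring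
    have e1 : (1 + v)^q = 1 + v^2 := by rw [fr, one_pow, hvq]
    have hfeq : (1 : F) = 1 + v := by
      apply hbij.injective
      show (1:F) + 1 ^ (2*q^2+2*q) + 1 ^ (2*q^2+2) + 1 ^ 4 + 1 ^ (4*q)
        = (1+v) + (1+v) ^ (2*q^2+2*q) + (1+v) ^ (2*q^2+2) + (1+v) ^ 4 + (1+v) ^ (4*q)
      rw [key 1, key (1+v), e2, e1]
      simp only [one_pow]
      linear_combination (1 + v^3 + v^4 + v^5 + v^8) * htr + (-31*v - 49*v^2 - 42*v^3
        - 47*v^4 - 34*v^5 - 32*v^6 - 18*v^7 - 13*v^8 - 6*v^9 - 4*v^10 - v^11 - v^12) * h2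
    exact hv0 (by linear_combination -hfeq)
  · -- m % 3 ≠ 1 → bijective
    intro hne
    have hq7 : q % 7 = 1 ∨ q % 7 = 4 := by
      have h3 : m % 3 = 0 ∨ m % 3 = 2 := by omega
      rcases h3 with h | h
      · left; rw [hq, hpm, h]; norm_num
      · right; rw [hq, hpm, h]; norm_num
    rw [← Finite.injective_iff_bijective]
    intro x y hxy
    simp only [] at hxy
    rw [key x, key y] at hxy
    -- step A : traces agree
    have htxy : x + x^q + (x^q)^q = y + y^q + (y^q)^q := by
      have h := congrArg (fun w : F => w + w^q + (w^q)^q) hxy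
      rw [stepA x, stepA y] at h
      exact h
    -- the linear relation on u = x + y
    have hu : x + y = (x + x^q + (x^q)^q)^2 * ((x + y) + (x^q + y^q))^2 := by
      linear_combination hxy
        - ((x + x^q + (x^q)^q) + (y + y^q + (y^q)^q)) * ((y + y^q)^2) * htxy
        + (-(x^q)*(y^q)*((x^q)^q)^2 - (x^q)^2*((x^q)^q)^2 - 2*(x^q)^2*(y^q)*((x^q)^q)
          - 2*(x^q)^3*((x^q)^q) - (x^q)^3*(y^q) - (x^q)^4 + y - y*(x^q)*((x^q)^q)^2
          - 2*y*(x^q)^2*((x^q)^q) - y*(x^q)^3 - x*(y^q)*((x^q)^q)^2 - 2*x*(x^q)*((x^q)^q)^2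
          - 4*x*(x^q)*(y^q)*((x^q)^q) - 6*x*(x^q)^2*((x^q)^q) - 3*x*(x^q)^2*(y^q)
          - 4*x*(x^q)^3 - x*y*((x^q)^q)^2 - 4*x*y*(x^q)*((x^q)^q) - 3*x*y*(x^q)^2
          - x^2*((x^q)^q)^2 - 2*x^2*(y^q)*((x^q)^q) - 6*x^2*(x^q)*((x^q)^q)
          - 3*x^2*(x^q)*(y^q) - 6*x^2*(x^q)^2 - 2*x^2*y*((x^q)^q) - 3*x^2*y*(x^q)
          - 2*x^3*((x^q)^q) - x^3*(y^q) - 4*x^3*(x^q) - x^3*y - x^4) * h2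
    have hu0 : (x + y) + (x + y)^q + ((x + y)^q)^q = 0 := by
      rw [fr, fr]
      linear_combination htxy + (y + y^q + (y^q)^q) * h2
    rw [← fr] at hu
    set t := x + x^q + (x^q)^q with htd
    have htq : t ^ q = t := by
      rw [htd, fr, fr, hq3]
      ring
    set u := x + y with hud
    clear_value t u
    by_cases hu00 : u = 0
    · have : x + y = 0 := by rw [← hud]; exact hu00
      linear_combination this - y * h2
    exfalso
    by_cases ht0 : t = 0
    · rw [ht0] at hu
      simp at hu
      exact hu00 hu
    -- derive u^q = t^2 u^2
    have hc2 : (u^q)^q = u + u^q := by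
      linear_combination hu0 - (u + u^q) * h2
    have h0 : u = t^2 * ((u^q)^q)^2 := by rw [hc2]; exact hu
    have h1 : u^q = t^2 * u^2 := by
      have h := congrArg (fun z : F => z ^ q) h0
      simp only [mul_pow, frsq, hq3, htq] at h
      exact h
    set v := t^2 * u with hvd
    have hvq : v ^ q = v ^ 2 := by
      rw [hvd, mul_pow, frsq, htq, h1]
      ring
    have hvne : v ≠ 0 := by
      rw [hvd]
      exact mul_ne_zero (pow_ne_zero _ ht0) hu00
    clear_value v
    have hv8 : v ^ 8 = v := by
      have e : ((v^q)^q)^q = v^8 := by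
        calc ((v^q)^q)^q = ((v^2)^q)^q := by rw [hvq]
          _ = ((v^q)^2)^q := by rw [frsq]
          _ = ((v^2)^2)^q := by rw [hvq]
          _ = ((v^2)^q)^2 := by rw [frsq]
          _ = ((v^q)^2)^2 := by rw [frsq]
          _ = ((v^2)^2)^2 := by rw [hvq]
          _ = v^8 := by ring
      rw [← e, hq3]
    have hv7 : v ^ 7 = 1 := by
      apply mul_left_cancel₀ hvne
      rw [← pow_succ', hv8, mul_one]
    have hvq7 : v ^ q = v ^ (q % 7) := by
      conv_lhs => rw [← Nat.div_add_mod q 7]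
      rw [pow_add, pow_mul, hv7, one_pow, one_mul]
    have hv1 : v = 1 := by
      rcases hq7 with h | h
      · rw [h, pow_one] at hvq7
        have : v * (v - 1) = 0 := by
          rw [hvq] at hvq7
          linear_combination hvq7
        rcases mul_eq_zero.mp this with h' | h'
        · exact absurd h' hvne
        · linear_combination h'
      · rw [h] at hvq7
        rw [hvq] at hvq7
        have hsq : v^2 = 1 := by
          have : v^2 * (v^2 - 1) = 0 := by linear_combination -hvq7
          rcases mul_eq_zero.mp this with h' | h'
          · exact absurd (pow_eq_zero_iff (by norm_num) |>.mp h') hvne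
          · linear_combination h'
        have : (v - 1)^2 = 0 := by linear_combination hsq + (1 - v) * h2
        have := pow_eq_zero_iff (n := 2) (by norm_num) |>.mp this
        linear_combination this
    -- v = 1 gives u^q = u, then trace forces u = 0
    have huq : u ^ q = u := by
      rw [h1]
      linear_combination u * hv1 - u * hvd
    rw [huq, huq] at hu0
    exact hu00 (by linear_combination hu0 - u * h2)
end

section
/- Let q = 2^m for a positive integer m. Then the polynomial f(x) = x^2 + x + x^q + x^{q^2+q} + x^{q^2+1} is a permutation polynomial of F_{q^3} if and only if m is not congruent to 1 modulo 3. -/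
/-!
Write `σ x = x ^ q`, so that `f x = x ^ 2 + x + σ x + σ² x * σ x + σ² x * x`, and let
`T = 1 + σ + σ²` be the trace to `𝔽_q`. In characteristic two `T (f x) = (T x) ^ 2`, so a
collision `f x = f y` forces `T d = 0` for `d = x + y`, i.e. `σ² d = d + σ d`; for such `d`,
`f (x + d) - f x = d + σ d + (σ d) ^ 2 + (d + σ d) * T x` with `T x ∈ 𝔽_q`. Solving this shows
that `u = σ d / d` is a root of `X ^ 3 + X + 1`, hence of order `7`, with
`u ^ (q + 1) = 1 + u = u ^ 3`; so `q ≡ 2 (mod 7)`, i.e. `m ≡ 1 (mod 3)`. Conversely, if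
`q ≡ 2 (mod 7)` then `7 ∣ q ^ 2 + q + 1`, so some root `u` of `X ^ 3 + X + 1` is a `(q - 1)`-th
power `d ^ (q - 1)`, and then `f (c + d) = f c` for `c = 1 + d / u ∈ 𝔽_q`.
-/

open Function

theorem two_pow_mod_seven_eq_two_iff (m : ℕ) : 2 ^ m % 7 = 2 ↔ m % 3 = 1 := by
  have h : 2 ^ m % 7 = 2 ^ (m % 3) % 7 := by
    conv_lhs => rw [← Nat.div_add_mod m 3, pow_add, pow_mul, Nat.mul_mod, Nat.pow_mod]
    norm_num
  have : m % 3 < 3 := Nat.mod_lt _ (by norm_num)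
  interval_cases hm : m % 3 <;> simp_all

theorem IsCyclic.exists_orderOf_eq_of_dvd {G : Type*} [Group G] [Finite G] [IsCyclic G] {n : ℕ}
    (hn : n ∣ Nat.card G) : ∃ g : G, orderOf g = n := by
  obtain ⟨g, hg⟩ := IsCyclic.exists_ofOrder_eq_natCard (α := G)
  obtain ⟨k, hk⟩ := hn
  have hk0 : k ≠ 0 := by rintro rfl; exact Nat.card_pos.ne' hk
  refine ⟨g ^ k, ?_⟩
  rw [orderOf_pow_of_dvd hk0 (hg ▸ hk ▸ dvd_mul_left k n), hg, hk,
    Nat.mul_div_cancel _ (Nat.pos_of_ne_zero hk0)]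

section CharTwo

variable {R : Type*} [CommRing R] [CharP R 2]

theorem pow_seven_eq_one_of_cubic_eq_zero {u : R} (hu : u ^ 3 + u + 1 = 0) : u ^ 7 = 1 := by
  grind

variable {K : Type*} [Field K] [CharP K 2]

theorem orderOf_eq_seven_of_cubic_eq_zero {u : K} (hu : u ^ 3 + u + 1 = 0) : orderOf u = 7 := by
  have : Fact (Nat.Prime 7) := ⟨by norm_num⟩
  refine orderOf_eq_prime (pow_seven_eq_one_of_cubic_eq_zero hu) ?_
  rintro rfl
  grind

theorem mod_seven_eq_two_of_cubic_eq_zero {u : K} {q : ℕ} (hu : u ^ 3 + u + 1 = 0)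
    (hq : u ^ (q + 1) = 1 + u) : q % 7 = 2 := by
  have hord := orderOf_eq_seven_of_cubic_eq_zero hu
  have hfin : IsOfFinOrder u := orderOf_pos_iff.mp (by omega)
  have h3 : u ^ (q + 1) = u ^ 3 := by grind
  have := hfin.pow_eq_pow_iff_modEq.mp h3
  rw [hord, Nat.ModEq] at this
  omega

theorem cubic_eq_zero_or_inv_cubic_eq_zero {u : K} (h7 : u ^ 7 = 1) (h1 : u ≠ 1) :
    u ^ 3 + u + 1 = 0 ∨ u⁻¹ ^ 3 + u⁻¹ + 1 = 0 := by
  have hu0 : u ≠ 0 := by rintro rfl; simp at h7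
  have hfac : (u + 1) * ((u ^ 3 + u + 1) * (u ^ 3 + u ^ 2 + 1)) = 0 := by grind
  have hu1 : u + 1 ≠ 0 := fun h => h1 (by grind)
  refine (mul_eq_zero.mp ((mul_eq_zero.mp hfac).resolve_left hu1)).imp id fun h => ?_
  field_simp
  grind

end CharTwo

section Quinomial

variable {R : Type*} [CommRing R] (σ : R →+* R)

def trace3 (x : R) : R := x + σ x + σ (σ x)

/-- With `σ = (· ^ q)` this is `x ^ 2 + x + x ^ q + x ^ (q ^ 2 + q) + x ^ (q ^ 2 + 1)`. -/
def quinomial (x : R) : R := x ^ 2 + x + σ x + σ (σ x) * σ x + σ (σ x) * x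

variable {σ}

theorem map_trace3 (hσ : ∀ x, σ (σ (σ x)) = x) (x : R) : σ (trace3 σ x) = trace3 σ x := by
  simp only [trace3, map_add, hσ]
  ring

variable [CharP R 2]

theorem trace3_quinomial (hσ : ∀ x, σ (σ (σ x)) = x) (x : R) :
    trace3 σ (quinomial σ x) = trace3 σ x ^ 2 := by
  simp only [trace3, quinomial, map_add, map_mul, map_pow, hσ]
  grind

theorem quinomial_add_of_map_map_eq {d : R} (hd : σ (σ d) = d + σ d) (x : R) :
    quinomial σ (x + d) = quinomial σ x + (d + σ d + σ d ^ 2 + (d + σ d) * trace3 σ x) := by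
  simp only [quinomial, trace3, map_add, hd]
  grind

theorem quinomial_add_eq_self {u d : R} (hu : u ^ 3 + u + 1 = 0) (hσu : σ u = u ^ 2)
    (hσd : σ d = u * d) : quinomial σ (1 + d * u ^ 6 + d) = quinomial σ (1 + d * u ^ 6) := by
  -- `1 + d * u ^ 6 = 1 + d / u` is fixed by `σ`, and it is the value of the trace that kills
  -- the increment of `quinomial_add_of_map_map_eq`.
  have hd : σ (σ d) = d + σ d := by rw [hσd, map_mul, hσu, hσd]; grind
  have hc : σ (1 + d * u ^ 6) = 1 + d * u ^ 6 := by
    rw [map_add, map_one, map_mul, map_pow, hσu, hσd]; grind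
  rw [quinomial_add_of_map_map_eq hd, trace3, hc, hc, hσd]
  grind

end Quinomial

section Collision

variable {K : Type*} [Field K] [CharP K 2] {σ : K →+* K}

theorem cubic_of_collision_increment {d c : K} (hd0 : d ≠ 0) (hd : σ (σ d) = d + σ d)
    (hc : σ c = c) (h : d + σ d + σ d ^ 2 + (d + σ d) * c = 0) :
    (σ d / d) ^ 3 + σ d / d + 1 = 0 ∧ σ (σ d / d) * (σ d / d) = 1 + σ d / d := by
  have he0 : σ d ≠ 0 := (map_ne_zero σ).mpr hd0
  set e := σ d
  have h3 : (d + e) * (1 + c) = e ^ 2 := by grind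
  have h4 : (d + e) ^ 2 = d * (1 + c) := by
    have := congrArg σ h3
    simp only [map_mul, map_add, map_one, map_pow, hd, hc] at this
    grind
  have hcub : d ^ 3 + d ^ 2 * e + e ^ 3 = 0 := by grind
  constructor
  · field_simp
    grind
  · rw [map_div₀, hd, show σ d = e from rfl]
    field_simp

theorem exists_cubic_of_quinomial_eq (hσ : ∀ x, σ (σ (σ x)) = x) {x y : K}
    (hxy : quinomial σ x = quinomial σ y) (hne : x ≠ y) :
    ∃ u : K, u ^ 3 + u + 1 = 0 ∧ σ u * u = 1 + u := by
  have htr : trace3 σ x = trace3 σ y :=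
    CharTwo.sq_injective (by simp only [← trace3_quinomial hσ, hxy])
  have hd0 : x + y ≠ 0 := fun h => hne (by grind)
  have hd : σ (σ (x + y)) = x + y + σ (x + y) := by
    simp only [trace3] at htr
    simp only [map_add]
    grind
  have hcol := quinomial_add_of_map_map_eq hd x
  rw [show x + (x + y) = y by grind, hxy] at hcol
  exact ⟨_, cubic_of_collision_increment hd0 hd (map_trace3 hσ x) (by grind)⟩

end Collision

theorem FiniteField.exists_orderOf_eq_seven_pow_eq_mul {F : Type*} [Field F] [Fintype F] {q : ℕ}
    (hF : Fintype.card F = q ^ 3) (hq : q % 7 = 2) :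
    ∃ u d : F, d ≠ 0 ∧ orderOf u = 7 ∧ d ^ q = u * d := by
  have hq1 : 0 < q - 1 := by omega
  have hdvd : 7 * (q - 1) ∣ Nat.card Fˣ := by
    rw [Nat.card_units, Nat.card_eq_fintype_card, hF]
    obtain ⟨k, hk⟩ : 7 ∣ q ^ 2 + q + 1 :=
      Nat.dvd_of_mod_eq_zero (by simp [Nat.add_mod, Nat.pow_mod, hq])
    refine ⟨k, ?_⟩
    zify [Nat.one_le_pow 3 q (by omega), show 1 ≤ q by omega] at hk ⊢
    linear_combination (q - 1 : ℤ) * hk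
  obtain ⟨g, hg⟩ := IsCyclic.exists_orderOf_eq_of_dvd hdvd
  refine ⟨(g : F) ^ (q - 1), g, g.ne_zero, ?_, ?_⟩
  · rw [← Units.val_pow_eq_pow_val, orderOf_units,
      orderOf_pow_of_dvd hq1.ne' (hg ▸ dvd_mul_left _ _), hg, Nat.mul_div_cancel _ hq1]
  · rw [← pow_succ, Nat.sub_add_cancel (by omega)]

theorem two_pow_mod_seven_of_not_injective {K : Type*} [Field K] [CharP K 2] {m : ℕ}
    (hσ : ∀ x : K,
      iterateFrobenius K 2 m (iterateFrobenius K 2 m (iterateFrobenius K 2 m x)) = x)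
    (h : ¬ Injective (quinomial (iterateFrobenius K 2 m))) : 2 ^ m % 7 = 2 := by
  obtain ⟨x, y, hxy, hne⟩ : ∃ x y, quinomial (iterateFrobenius K 2 m) x =
      quinomial (iterateFrobenius K 2 m) y ∧ x ≠ y := by
    simpa [Injective] using h
  obtain ⟨u, hu, hσu⟩ := exists_cubic_of_quinomial_eq hσ hxy hne
  exact mod_seven_eq_two_of_cubic_eq_zero hu (by rwa [pow_succ, ← iterateFrobenius_def])

theorem not_injective_quinomial_of_two_pow_mod_seven {F : Type*} [Field F] [Fintype F]
    [CharP F 2] {m : ℕ} (hF : Fintype.card F = (2 ^ m) ^ 3) (hm : 2 ^ m % 7 = 2) :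
    ¬ Injective (quinomial (iterateFrobenius F 2 m)) := by
  obtain ⟨u, d, hd0, hu, hσd⟩ := FiniteField.exists_orderOf_eq_seven_pow_eq_mul hF hm
  rw [← iterateFrobenius_def] at hσd
  have hσ7 : ∀ v : F, v ^ 7 = 1 → iterateFrobenius F 2 m v = v ^ 2 := by
    intro v hv
    rw [iterateFrobenius_def, ← Nat.div_add_mod (2 ^ m) 7, hm, pow_add, pow_mul, hv, one_pow,
      one_mul]
  have hu7 : u ^ 7 = 1 := hu ▸ pow_orderOf_eq_one u
  have hu1 : u ≠ 1 := by rintro rfl; simp at hu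
  intro hinj
  rcases cubic_eq_zero_or_inv_cubic_eq_zero hu7 hu1 with h | h
  · exact hd0 (add_eq_left.mp (hinj (quinomial_add_eq_self h (hσ7 u hu7) hσd)))
  · refine inv_ne_zero hd0 (add_eq_left.mp (hinj (quinomial_add_eq_self h
      (hσ7 _ (by rw [inv_pow, hu7, inv_one])) ?_)))
    rw [map_inv₀, hσd, mul_inv]

theorem stmt_4_general (m : ℕ) (q : ℕ) (hq : q = 2 ^ m)
    (F : Type*) [Field F] [Fintype F] (hF : Fintype.card F = q ^ 3) :
    Function.Bijective
      (fun x : F => x ^ 2 + x + x ^ q + x ^ (q ^ 2 + q) + x ^ (q ^ 2 + 1))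
      ↔ m % 3 ≠ 1 := by
  subst hq
  have : CharP F 2 := charP_of_card_eq_prime_pow (hF.trans (pow_mul 2 m 3).symm)
  have hσ : ∀ x : F,
      iterateFrobenius F 2 m (iterateFrobenius F 2 m (iterateFrobenius F 2 m x)) = x := by
    intro x
    simp only [iterateFrobenius_def, ← pow_mul]
    rw [show 2 ^ m * 2 ^ m * 2 ^ m = Fintype.card F by rw [hF]; ring, FiniteField.pow_card]
  have hf : (fun x : F => x ^ 2 + x + x ^ 2 ^ m + x ^ ((2 ^ m) ^ 2 + 2 ^ m) +
      x ^ ((2 ^ m) ^ 2 + 1)) = quinomial (iterateFrobenius F 2 m) := by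
    funext x
    simp only [quinomial, iterateFrobenius_def, ← pow_mul]
    ring
  rw [hf, ← Finite.injective_iff_bijective, Ne, ← two_pow_mod_seven_eq_two_iff, iff_not_comm]
  exact ⟨not_injective_quinomial_of_two_pow_mod_seven hF, two_pow_mod_seven_of_not_injective hσ⟩

theorem stmt_4 (m : ℕ) (hm : 0 < m) (q : ℕ) (hq : q = 2 ^ m)
    (F : Type*) [Field F] [Fintype F] (hF : Fintype.card F = q ^ 3) :
    Function.Bijective
      (fun x : F => x ^ 2 + x + x ^ q + x ^ (q ^ 2 + q) + x ^ (q ^ 2 + 1))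
      ↔ m % 3 ≠ 1 :=
  stmt_4_general m q hq F hF
end

section
/- Let q = 2^m for a positive integer m. Then the map f(x) = x^2 + x + x^q + x^{2q^2+2q} + x^{2q^2+2} is a permutation polynomial of F_{q^3}. -/
private lemma stmt5_core (F : Type*) [Field F] (q : ℕ) (hq0 : q ≠ 0)
    (h2 : (2 : F) = 0)
    (hadd : ∀ a b : F, (a + b) ^ q = a ^ q + b ^ q)
    (hswap2 : ∀ z : F, (z ^ 2) ^ q = (z ^ q) ^ 2)
    (hswap4 : ∀ z : F, (z ^ 4) ^ q = (z ^ q) ^ 4)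
    (hpow3 : ∀ z : F, ((z ^ q) ^ q) ^ q = z)
    (s d : F) (hs : s ^ q = s)
    (htr : d + d ^ q + (d ^ q) ^ q = 0)
    (heq : (d ^ q) ^ 2 = d ^ 4 + s * d ^ 2 + d) : d = 0 := by
  have hp_eq : (d ^ q) ^ q = d + d ^ q := by
    linear_combination htr - (d + d ^ q) * h2
  have hB : (d + d ^ q) ^ 2 = (d ^ q) ^ 4 + s * (d ^ q) ^ 2 + d ^ q := by
    have h := congrArg (· ^ q) heq
    simp only [hadd, mul_pow, hswap2, hswap4, hs, hp_eq] at h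
    linear_combination h
  have hQ : (d ^ 2 + d * d ^ q + (d ^ q) ^ 2) ^ 2
      = (d ^ 2 * d ^ q + d * (d ^ q) ^ 2) ^ 2 + (d ^ 2 * d ^ q + d * (d ^ q) ^ 2) := by
    linear_combination ((d ^ q) ^ 2) * heq + (d ^ 2) * hB
      + (d * (d ^ q) ^ 3 + d ^ 2 * s * (d ^ q) ^ 2 + d ^ 2 * (d ^ q) ^ 2
        - d ^ 3 * (d ^ q) ^ 3) * h2
  set r : F := d ^ 2 + d * d ^ q + (d ^ q) ^ 2 + (d ^ 2 * d ^ q + d * (d ^ q) ^ 2) with hr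
  have hr2 : r ^ 2 = d ^ 2 * d ^ q + d * (d ^ q) ^ 2 := by
    linear_combination (r + (d ^ 2 + d * d ^ q + (d ^ q) ^ 2)
        + (d ^ 2 * d ^ q + d * (d ^ q) ^ 2)) * hr + hQ
      + (d * (d ^ q) ^ 4 + 2 * d ^ 2 * (d ^ q) ^ 3 + d ^ 2 * (d ^ q) ^ 4
        + 2 * d ^ 3 * (d ^ q) ^ 2 + 2 * d ^ 3 * (d ^ q) ^ 3 + d ^ 4 * d ^ q
        + d ^ 4 * (d ^ q) ^ 2) * h2
  have hrq : r ^ q = r := by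
    rw [hr]
    simp only [hadd, mul_pow, hswap2, hp_eq]
    linear_combination (d * d ^ q + d * (d ^ q) ^ 2 + (d ^ q) ^ 2 + (d ^ q) ^ 3) * h2
  have hroot : (r + d) * (r + d ^ q) * (r + (d + d ^ q)) = 0 := by
    linear_combination (r + 1) * hr2 - r * hr
      + (d * r * d ^ q + d * r ^ 2 + d * (d ^ q) ^ 2 + d ^ 2 * d ^ q + r ^ 2 * d ^ q) * h2
  rcases mul_eq_zero.mp hroot with h | h
  · rcases mul_eq_zero.mp h with h | h
    · have hd : d = r := by linear_combination -h + d * h2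
      have hu : d ^ q = d := by rw [hd]; exact hrq
      simp only [hu] at htr
      linear_combination htr - d * h2
    · have hu : d ^ q = r := by linear_combination -h + d ^ q * h2
      have hp : (d ^ q) ^ q = d ^ q := by rw [hu]; exact hrq
      simp only [hp] at htr
      linear_combination htr - d ^ q * h2
  · have h1 : d + d ^ q = r := by linear_combination -h + (d + d ^ q) * h2
    have h3 : d ^ q + (d ^ q) ^ q = r := by
      rw [← hrq, ← hadd, h1]
    rw [hp_eq] at h3
    have hu0 : d ^ q = 0 := by linear_combination h3 - h1
    have h5 := hpow3 d
    rw [hu0] at h5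
    simpa [zero_pow hq0] using h5.symm

theorem stmt_5 (m : ℕ) (hm : 0 < m) (q : ℕ) (hq : q = 2 ^ m)
    (F : Type*) [Field F] [Fintype F] (hF : Fintype.card F = q ^ 3) :
    Function.Bijective
      (fun x : F => x ^ 2 + x + x ^ q + x ^ (2 * q ^ 2 + 2 * q) + x ^ (2 * q ^ 2 + 2)) := by
  have hq0 : q ≠ 0 := by subst hq; positivity
  haveI hfact : Fact (Nat.Prime 2) := ⟨Nat.prime_two⟩
  haveI hchar : CharP F 2 := by
    obtain ⟨n, hp, hcard⟩ := FiniteField.card F (ringChar F)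
    have hpn : ringChar F ^ (n : ℕ) = 2 ^ (m * 3) := by
      rw [← hcard, hF, hq, ← pow_mul]
    have hdvd2 : ringChar F ∣ 2 := hp.dvd_of_dvd_pow (n := m * 3) (by
      rw [← hpn]; exact dvd_pow_self _ n.pos.ne')
    have h32 : ringChar F = 2 := (Nat.prime_dvd_prime_iff_eq hp Nat.prime_two).mp hdvd2
    exact h32 ▸ ringChar.charP F
  have h2 : (2 : F) = 0 := CharTwo.two_eq_zero
  have hadd : ∀ a b : F, (a + b) ^ q = a ^ q + b ^ q := by
    intro a b
    rw [hq]
    exact add_pow_char_pow a b 2 m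
  have hpow3 : ∀ z : F, ((z ^ q) ^ q) ^ q = z := by
    intro z
    have h3 : q * (q * q) = q ^ 3 := by ring
    rw [← pow_mul, ← pow_mul, h3, ← hF]
    exact FiniteField.pow_card z
  have hswap : ∀ (z : F) (n : ℕ), (z ^ n) ^ q = (z ^ q) ^ n := by
    intro z n
    rw [← pow_mul, mul_comm, pow_mul]
  have hswap2 : ∀ z : F, (z ^ 2) ^ q = (z ^ q) ^ 2 := fun z => hswap z 2
  have hswap4 : ∀ z : F, (z ^ 4) ^ q = (z ^ q) ^ 4 := fun z => hswap z 4
  have sqinj : ∀ a b : F, a ^ 2 = b ^ 2 → a = b := by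
    intro a b hab
    have h0 : (a + b) ^ 2 = 0 := by linear_combination hab + (a * b + b ^ 2) * h2
    have h1 : a + b = 0 := (pow_eq_zero_iff (by norm_num : (2 : ℕ) ≠ 0)).mp h0
    linear_combination h1 - b * h2
  have hsqrt : ∀ z : F, (z ^ 2 ^ (3 * m - 1)) ^ 2 = z := by
    intro z
    rw [← pow_mul, ← pow_succ]
    have h1 : 3 * m - 1 + 1 = 3 * m := by omega
    rw [h1]
    have h23 : (2 : ℕ) ^ (3 * m) = q ^ 3 := by rw [hq, ← pow_mul, mul_comm 3 m]
    rw [h23, ← hF]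
    exact FiniteField.pow_card z
  have hE : ∀ z : F,
      z ^ 2 + z + z ^ q + z ^ (2 * q ^ 2 + 2 * q) + z ^ (2 * q ^ 2 + 2)
        = z ^ 2 + ((z ^ q) ^ q) ^ 4 + (z + z ^ q + (z ^ q) ^ q) ^ 2 * ((z ^ q) ^ q) ^ 2
          + (z ^ q) ^ q + (z + z ^ q + (z ^ q) ^ q) := by
    intro z
    have e1 : z ^ (2 * q ^ 2 + 2 * q) = ((z ^ q) ^ q) ^ 2 * (z ^ q) ^ 2 := by
      have h' : 2 * q ^ 2 + 2 * q = q * q * 2 + q * 2 := by ring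
      rw [h', pow_add, pow_mul, pow_mul, pow_mul]
    have e2 : z ^ (2 * q ^ 2 + 2) = ((z ^ q) ^ q) ^ 2 * z ^ 2 := by
      have h' : 2 * q ^ 2 + 2 = q * q * 2 + 2 := by ring
      rw [h', pow_add, pow_mul, pow_mul]
    rw [e1, e2]
    linear_combination (-(z * z ^ q * ((z ^ q) ^ q) ^ 2 + z * ((z ^ q) ^ q) ^ 3
      + z ^ q * ((z ^ q) ^ q) ^ 3 + (z ^ q) ^ q + ((z ^ q) ^ q) ^ 4)) * h2
  have hT : ∀ w z : F,
      w = z ^ 2 + z + z ^ q + z ^ (2 * q ^ 2 + 2 * q) + z ^ (2 * q ^ 2 + 2) →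
      w + w ^ q + (w ^ q) ^ q = (z + z ^ q + (z ^ q) ^ q) ^ 2 := by
    intro w z hw
    have hfq : w ^ q = (z ^ q) ^ 2 + z ^ 4 + (z + z ^ q + (z ^ q) ^ q) ^ 2 * z ^ 2
        + z + (z + z ^ q + (z ^ q) ^ q) := by
      rw [hw, hE z]
      simp only [hadd, mul_pow, hswap2, hswap4, hpow3]
      ring
    have hfqq : (w ^ q) ^ q = ((z ^ q) ^ q) ^ 2 + (z ^ q) ^ 4
        + (z + z ^ q + (z ^ q) ^ q) ^ 2 * (z ^ q) ^ 2 + z ^ q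
        + (z + z ^ q + (z ^ q) ^ q) := by
      rw [hfq]
      simp only [hadd, mul_pow, hswap2, hswap4, hpow3]
      ring
    rw [hfqq, hfq, hw, hE z]
    linear_combination (2 * z - z * z ^ q + z * z ^ q * ((z ^ q) ^ q) ^ 2
      + z * (z ^ q) ^ 2 * (z ^ q) ^ q + z * (z ^ q) ^ 3 - z * (z ^ q) ^ q
      + z * ((z ^ q) ^ q) ^ 3 + z ^ 2 * z ^ q * (z ^ q) ^ q + z ^ 2 * (z ^ q) ^ 2
      + z ^ 2 * ((z ^ q) ^ q) ^ 2 + z ^ 3 * z ^ q + z ^ 3 * (z ^ q) ^ q + z ^ 4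
      + 2 * z ^ q - z ^ q * (z ^ q) ^ q + z ^ q * ((z ^ q) ^ q) ^ 3
      + (z ^ q) ^ 2 * ((z ^ q) ^ q) ^ 2 + (z ^ q) ^ 3 * (z ^ q) ^ q + (z ^ q) ^ 4
      + 2 * (z ^ q) ^ q + ((z ^ q) ^ q) ^ 4) * h2
  rw [← Finite.injective_iff_bijective]
  intro x y hxy
  dsimp only at hxy
  have tx := hT _ x rfl
  have ty := hT _ y rfl
  rw [hxy] at tx
  have hXY : (y + y ^ q + (y ^ q) ^ q) ^ 2 = (x + x ^ q + (x ^ q) ^ q) ^ 2 :=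
    ty.symm.trans tx
  have hsx : y + y ^ q + (y ^ q) ^ q = x + x ^ q + (x ^ q) ^ q := sqinj _ _ hXY
  have hff := (hE x).symm.trans (hxy.trans (hE y))
  rw [hsx] at hff
  have hcval : (x + y) ^ 2 + ((x ^ q) ^ q + (y ^ q) ^ q) ^ 4
      + (x + x ^ q + (x ^ q) ^ q) ^ 2 * ((x ^ q) ^ q + (y ^ q) ^ q) ^ 2
      + ((x ^ q) ^ q + (y ^ q) ^ q) = 0 := by
    linear_combination hff + (2 * x * x ^ q * (x ^ q) ^ q * (y ^ q) ^ q
      + 2 * x * x ^ q * ((y ^ q) ^ q) ^ 2 + 2 * x * (x ^ q) ^ q * ((y ^ q) ^ q) ^ 2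
      + 2 * x * ((x ^ q) ^ q) ^ 2 * (y ^ q) ^ q + x * y
      + x ^ 2 * (x ^ q) ^ q * (y ^ q) ^ q + x ^ 2 * ((y ^ q) ^ q) ^ 2
      + 2 * x ^ q * (x ^ q) ^ q * ((y ^ q) ^ q) ^ 2
      + 2 * x ^ q * ((x ^ q) ^ q) ^ 2 * (y ^ q) ^ q
      + (x ^ q) ^ 2 * (x ^ q) ^ q * (y ^ q) ^ q + (x ^ q) ^ 2 * ((y ^ q) ^ q) ^ 2
      + 2 * (x ^ q) ^ q * ((y ^ q) ^ q) ^ 3 + 4 * ((x ^ q) ^ q) ^ 2 * ((y ^ q) ^ q) ^ 2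
      + 3 * ((x ^ q) ^ q) ^ 3 * (y ^ q) ^ q + y ^ 2 + (y ^ q) ^ q
      + ((y ^ q) ^ q) ^ 4) * h2
  set dd : F := (((x + y) ^ q) ^ q) ^ 2 ^ (3 * m - 1) with hdd
  have hd2 : dd ^ 2 = ((x + y) ^ q) ^ q := hsqrt _
  have hu2 : (dd ^ q) ^ 2 = x + y := by
    rw [← hswap2 dd, hd2]; exact hpow3 (x + y)
  have hp2 : ((dd ^ q) ^ q) ^ 2 = x ^ q + y ^ q := by
    rw [← hswap2 (dd ^ q), hu2]; exact hadd x y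
  have hd2c : dd ^ 2 = (x ^ q) ^ q + (y ^ q) ^ q := by
    rw [hd2]; simp only [hadd]
  have htr : dd + dd ^ q + (dd ^ q) ^ q = 0 := by
    apply sqinj _ 0
    have h0 : (dd + dd ^ q + (dd ^ q) ^ q) ^ 2 = 0 := by
      linear_combination hd2c + hu2 + hp2 + hsx + (dd * ((dd ^ q) ^ q) + dd * dd ^ q
        + ((dd ^ q) ^ q) * dd ^ q + x + x ^ q + (x ^ q) ^ q) * h2
    rw [h0]
    norm_num
  have hA0 : (dd ^ q) ^ 2 + dd ^ 4 + (x + x ^ q + (x ^ q) ^ q) * dd ^ 2 + dd = 0 := by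
    apply sqinj _ 0
    have h0 : ((dd ^ q) ^ 2 + dd ^ 4 + (x + x ^ q + (x ^ q) ^ q) * dd ^ 2 + dd) ^ 2 = 0 := by
      linear_combination ((dd ^ q) ^ 2 + (x + y)) * hu2
        + (dd ^ 6 + dd ^ 4 * ((x ^ q) ^ q + (y ^ q) ^ q)
          + dd ^ 2 * ((x ^ q) ^ q + (y ^ q) ^ q) ^ 2 + ((x ^ q) ^ q + (y ^ q) ^ q) ^ 3
          + (x + x ^ q + (x ^ q) ^ q) ^ 2 * (dd ^ 2 + ((x ^ q) ^ q + (y ^ q) ^ q))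
          + 1) * hd2c
        + hcval
        + (dd * (dd ^ q) ^ 2 + dd ^ 2 * (dd ^ q) ^ 2 * (x + x ^ q + (x ^ q) ^ q)
          + dd ^ 3 * (x + x ^ q + (x ^ q) ^ q) + dd ^ 4 * (dd ^ q) ^ 2 + dd ^ 5
          + dd ^ 6 * (x + x ^ q + (x ^ q) ^ q)) * h2
    rw [h0]
    norm_num
  have heq : (dd ^ q) ^ 2 = dd ^ 4 + (x + x ^ q + (x ^ q) ^ q) * dd ^ 2 + dd := by
    linear_combination hA0 - (dd ^ 4 + (x + x ^ q + (x ^ q) ^ q) * dd ^ 2 + dd) * h2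
  have hsfix : (x + x ^ q + (x ^ q) ^ q) ^ q = x + x ^ q + (x ^ q) ^ q := by
    simp only [hadd, hpow3]
    ring
  have hd0 : dd = 0 :=
    stmt5_core F q hq0 h2 hadd hswap2 hswap4 hpow3 (x + x ^ q + (x ^ q) ^ q) dd
      hsfix htr heq
  have hxy0 : x + y = 0 := by
    rw [← hu2, hd0]
    simp [zero_pow hq0]
  linear_combination hxy0 - y * h2
end

section
/- Let q = 2^m for a positive integer m. Then f(x) = x^2 + x^{q+2} + x^{q^2+2q} + x^{3q^2} + x^3 is a permutation polynomial of F_{q^3} if and only if m is not congruent to 2 modulo 3. -/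
theorem stmt_7 (m : ℕ) (hm : 0 < m) (q : ℕ) (hq : q = 2 ^ m)
    (F : Type*) [Field F] [Fintype F] (hF : Fintype.card F = q ^ 3) :
    Function.Bijective
      (fun x : F => x ^ 2 + x ^ (q + 2) + x ^ (q ^ 2 + 2 * q) + x ^ (3 * q ^ 2) + x ^ 3)
      ↔ m % 3 ≠ 2 := by
  classical
  have hq2 : 2 ≤ q := by
    rw [hq]
    calc (2:ℕ) = 2 ^ 1 := rfl
      _ ≤ 2 ^ m := Nat.pow_le_pow_right (by norm_num) hm
  -- characteristic 2
  haveI hrc : CharP F (ringChar F) := ringChar.charP F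
  have hpr : (ringChar F).Prime := CharP.char_is_prime F _
  obtain ⟨n, -, hc⟩ := FiniteField.card F (ringChar F)
  have hchar2 : ringChar F = 2 := by
    have hd : ringChar F ∣ 2 ^ (m * 3) := by
      have hcard2 : (2:ℕ) ^ (m * 3) = ringChar F ^ (n : ℕ) := by
        rw [← hc, hF, hq, ← pow_mul]
      rw [hcard2]
      exact dvd_pow_self _ (by exact_mod_cast n.pos.ne')
    have := hpr.dvd_of_dvd_pow hd
    exact (Nat.prime_dvd_prime_iff_eq hpr Nat.prime_two).mp this
  haveI hC2 : CharP F 2 := hchar2 ▸ hrc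
  haveI hE2 : ExpChar F 2 := ExpChar.prime Nat.prime_two
  have h2 : (2 : F) = 0 := by
    have := CharP.cast_eq_zero F 2
    exact_mod_cast this
  -- the Frobenius x ↦ x ^ q
  set φ : F →+* F := iterateFrobenius F 2 m with hφ
  have hφdef : ∀ u : F, φ u = u ^ q := by
    intro u; rw [hφ, iterateFrobenius_def, hq]
  have hφ3 : ∀ u : F, φ (φ (φ u)) = u := by
    intro u
    rw [hφdef, hφdef, hφdef, ← pow_mul, ← pow_mul]
    have e : q * (q * q) = Fintype.card F := by rw [hF]; ring
    rw [e, FiniteField.pow_card]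
  have hφS : ∀ u : F, φ (u + φ u + φ (φ u)) = u + φ u + φ (φ u) := by
    intro u; rw [map_add, map_add, hφ3]; ring
  -- key identity
  have keyA : ∀ a : F,
      a ^ 2 + a ^ (q + 2) + a ^ (q ^ 2 + 2 * q) + a ^ (3 * q ^ 2) + a ^ 3
        = (1 + (a + φ a + φ (φ a))) * a ^ 2
          + (a + φ a + φ (φ a)) ^ 2 * (a + φ a) + (a + φ a + φ (φ a)) ^ 3 := by
    intro a
    have e1 : a ^ (q + 2) = φ a * a ^ 2 := by rw [hφdef, pow_add]
    have e2 : a ^ (q ^ 2 + 2 * q) = φ (φ a) * (φ a) ^ 2 := by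
      rw [hφdef, hφdef, pow_add, pow_two q, pow_mul, mul_comm 2 q, pow_mul]
    have e3 : a ^ (3 * q ^ 2) = (φ (φ a)) ^ 3 := by
      rw [hφdef, hφdef, mul_comm 3 (q ^ 2), pow_two q, pow_mul, pow_mul]
    rw [e1, e2, e3]
    generalize φ (φ a) = z
    generalize φ a = y
    linear_combination ((-2)*y*z^2 + (-2)*y^2*z + (-1)*y^3 + (-2)*a*z^2 + (-5)*a*y*z
      + (-3)*a*y^2 + (-3)*a^2*z + (-3)*a^2*y + (-1)*a^3) * h2
  -- trace identity
  have keyB : ∀ a : F,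
      (a ^ 2 + a ^ (q + 2) + a ^ (q ^ 2 + 2 * q) + a ^ (3 * q ^ 2) + a ^ 3)
        + φ (a ^ 2 + a ^ (q + 2) + a ^ (q ^ 2 + 2 * q) + a ^ (3 * q ^ 2) + a ^ 3)
        + φ (φ (a ^ 2 + a ^ (q + 2) + a ^ (q ^ 2 + 2 * q) + a ^ (3 * q ^ 2) + a ^ 3))
        = (a + φ a + φ (φ a)) ^ 2 := by
    intro a
    rw [keyA a]
    simp only [map_add, map_mul, map_pow, map_one, hφ3]
    linear_combination ((3)*(φ (φ a))^3 + (-1)*(φ a)*(φ (φ a)) + (8)*(φ a)*(φ (φ a))^2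
      + (8)*(φ a)^2*(φ (φ a)) + (3)*(φ a)^3 + (-1)*a*(φ (φ a)) + (8)*a*(φ (φ a))^2
      + (-1)*a*(φ a) + (15)*a*(φ a)*(φ (φ a)) + (8)*a*(φ a)^2 + (8)*a^2*(φ (φ a))
      + (8)*a^2*(φ a) + (3)*a^3) * h2
  -- squaring is injective
  have sqinj : ∀ u v : F, u ^ 2 = v ^ 2 → u = v := by
    intro u v h
    have h4 : (u - v) ^ 2 = 0 := by linear_combination h + (v ^ 2 - u * v) * h2
    exact sub_eq_zero.mp (sq_eq_zero_iff.mp h4)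
  -- facts about roots of r^3 + r^2 + 1
  have hr7gen : ∀ r : F, r ^ 3 + r ^ 2 + 1 = 0 → r ^ 7 = 1 := by
    intro r hcube
    linear_combination (1 + r^2 + r^3 + r^4) * hcube
      + (-1 - r^2 - r^3 - r^4 - r^5 - r^6) * h2
  have hr8kgen : ∀ r : F, r ^ 7 = 1 → ∀ k, r ^ 8 ^ k = r := by
    intro r h7 k
    have h8 : r ^ 8 = r := by rw [pow_succ, h7, one_mul]
    induction k with
    | zero => simp
    | succ k ih => rw [pow_succ, pow_mul, ih, h8]
  have hr1gen : ∀ r : F, r ^ 3 + r ^ 2 + 1 = 0 → r ≠ 1 := by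
    intro r hcube h
    rw [h] at hcube
    have h1 : (1 : F) = 0 := by linear_combination hcube - h2
    exact one_ne_zero h1
  constructor
  · -- bijective → m % 3 ≠ 2
    intro hbij hm2
    have hm2' : 2 ≤ m := by omega
    have hq4 : 4 ≤ q := by
      rw [hq]
      calc (4:ℕ) = 2 ^ 2 := rfl
        _ ≤ 2 ^ m := Nat.pow_le_pow_right (by norm_num) hm2'
    obtain ⟨g, hg⟩ := IsCyclic.exists_generator (α := Fˣ)
    have hcardu : Nat.card Fˣ = q ^ 3 - 1 := by
      rw [Nat.card_units, Nat.card_eq_fintype_card, hF]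
    have hog : orderOf g = q ^ 3 - 1 := by
      rw [orderOf_eq_card_of_forall_mem_zpowers hg, hcardu]
    have hgone : g ^ (q ^ 3 - 1) = 1 := by rw [← hog]; exact pow_orderOf_eq_one g
    have hgpow : (g : F) ^ (q ^ 3 - 1) = 1 := by
      rw [← Units.val_pow_eq_pow_val, hgone, Units.val_one]
    have hq3big : 64 ≤ q ^ 3 := by
      calc (64:ℕ) = 4 ^ 3 := rfl
        _ ≤ q ^ 3 := Nat.pow_le_pow_left hq4 3
    have h7 : 7 ∣ q ^ 3 - 1 := by
      have e : q ^ 3 = 8 ^ m := by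
        rw [hq, ← pow_mul, mul_comm, pow_mul]; norm_num
      rw [e]
      have := Nat.sub_dvd_pow_sub_pow 8 1 m
      simpa using this
    set N := (q ^ 3 - 1) / 7 with hN
    have hN7 : N * 7 = q ^ 3 - 1 := Nat.div_mul_cancel h7
    have hNpos : 0 < N := by
      rw [hN]
      apply Nat.div_pos _ (by norm_num)
      omega
    have hNlt : N < q ^ 3 - 1 := by omega
    set ζ : F := (g : F) ^ N with hζ
    have hζ7 : ζ ^ 7 = 1 := by rw [hζ, ← pow_mul, hN7, hgpow]
    have hζ1 : ζ ≠ 1 := by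
      intro h
      rw [hζ] at h
      have hu : g ^ N = 1 := by
        apply Units.ext
        push_cast
        exact h
      have hd := orderOf_dvd_of_pow_eq_one hu
      rw [hog] at hd
      have := Nat.le_of_dvd hNpos hd
      omega
    have hsum : ζ^6 + ζ^5 + ζ^4 + ζ^3 + ζ^2 + ζ + 1 = 0 := by
      have h0 : (ζ - 1) * (ζ^6 + ζ^5 + ζ^4 + ζ^3 + ζ^2 + ζ + 1) = 0 := by
        linear_combination hζ7
      rcases mul_eq_zero.mp h0 with h | h
      · exact absurd (sub_eq_zero.mp h) hζ1
      · exact h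
    have hfac : (ζ^3 + ζ + 1) * (ζ^3 + ζ^2 + 1) = 0 := by
      linear_combination hsum + ζ^3 * h2
    obtain ⟨r, hcube⟩ : ∃ r : F, r ^ 3 + r ^ 2 + 1 = 0 := by
      rcases mul_eq_zero.mp hfac with h | h
      · exact ⟨ζ^6, by linear_combination (ζ^4 + ζ^5 + ζ^11) * hζ7 + (1 + ζ + ζ^2) * h
          + (-ζ - ζ^2 - ζ^3) * h2⟩
      · exact ⟨ζ, h⟩
    have hr7 := hr7gen r hcube
    have hr8k := hr8kgen r hr7
    have hr1 := hr1gen r hcube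
    have hrq : r ^ q = 1 + r + r ^ 2 := by
      have e : q = 8 ^ (m / 3) * 4 := by
        rw [hq, show (8:ℕ) = 2 ^ 3 from rfl, show (4:ℕ) = 2 ^ 2 from rfl,
          ← pow_mul, ← pow_add]
        congr 1
        omega
      rw [e, pow_mul, hr8k]
      linear_combination (1 + r) * hcube + (-1 - r - r^2 - r^3) * h2
    set s : F := (g : F) ^ (q ^ 2 + q + 1) with hsdef
    have hs0 : s ≠ 0 := pow_ne_zero _ (Units.ne_zero g)
    have hs1 : s ≠ 1 := by
      intro h
      rw [hsdef] at h
      have hu : g ^ (q ^ 2 + q + 1) = 1 := by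
        apply Units.ext
        push_cast
        exact h
      have hd := orderOf_dvd_of_pow_eq_one hu
      rw [hog] at hd
      have hle := Nat.le_of_dvd (by positivity) hd
      have h4q : 4 * q ^ 2 ≤ q ^ 3 := by
        calc 4 * q ^ 2 ≤ q * q ^ 2 := Nat.mul_le_mul_right _ hq4
          _ = q ^ 3 := by ring
      have hqq : q ≤ q ^ 2 := by
        calc q = q * 1 := by ring
          _ ≤ q * q := Nat.mul_le_mul_left q (by omega)
          _ = q ^ 2 := by ring
      omega
    have hsq : s ^ q = s := by
      rw [hsdef, ← pow_mul]
      have e : (q ^ 2 + q + 1) * q = (q ^ 3 - 1) + (q ^ 2 + q + 1) := by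
        have h1 : (q ^ 2 + q + 1) * q = q ^ 3 + q ^ 2 + q := by ring
        rw [h1]
        omega
      rw [e, pow_add, hgpow, one_mul]
    have hφs : φ s = s := by rw [hφdef]; exact hsq
    have h1s : (1 : F) + s ≠ 0 := fun h => hs1 (by linear_combination h - h2)
    have h1r : (1 : F) + r ≠ 0 := fun h => hr1 (by linear_combination h - h2)
    set x : F := s ^ 2 * (1 + r) * (1 + s)⁻¹ with hx
    have hx0 : x ≠ 0 :=
      mul_ne_zero (mul_ne_zero (pow_ne_zero _ hs0) h1r) (inv_ne_zero h1s)
    have hφx : φ x = r * x := by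
      rw [hx]
      simp only [map_mul, map_inv₀, map_pow, map_add, map_one, hφs]
      rw [hφdef r, hrq]
      have hkey : (1 : F) + (1 + r + r ^ 2) = r * (1 + r) := by linear_combination h2
      rw [hkey]; ring
    have hφ2x : φ (φ x) = (1 + r + r ^ 2) * (r * x) := by
      rw [hφx, map_mul, hφx, hφdef r, hrq]
    have hxdef2 : (1 + s) * x = s ^ 2 * (1 + r) := by
      rw [hx]; field_simp
    have hφb : φ (s + x) = s + r * x := by rw [map_add, hφs, hφx]
    have hφ2b : φ (φ (s + x)) = s + (1 + r + r ^ 2) * (r * x) := by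
      rw [hφb, map_add, hφs, map_mul, hφx, hφdef r, hrq]
    have hSa : s + φ s + φ (φ s) = s := by
      rw [hφs, hφs]; linear_combination s * h2
    have hSb : (s + x) + φ (s + x) + φ (φ (s + x)) = s := by
      rw [hφ2b, hφb]
      linear_combination s * h2 + x * hcube + (x * r) * h2
    have hfeq : s ^ 2 + s ^ (q + 2) + s ^ (q ^ 2 + 2 * q) + s ^ (3 * q ^ 2) + s ^ 3
        = (s + x) ^ 2 + (s + x) ^ (q + 2) + (s + x) ^ (q ^ 2 + 2 * q)
          + (s + x) ^ (3 * q ^ 2) + (s + x) ^ 3 := by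
      rw [keyA s, keyA (s + x), hSa, hSb, hφs, hφb]
      linear_combination (-x) * hxdef2 + (-(1+s)*s*x - s^2*(1+r)*x) * h2
    have hne : s ≠ s + x := by
      intro h
      exact hx0 (by linear_combination -h)
    exact hne (hbij.injective hfeq)
  · -- m % 3 ≠ 2 → bijective
    intro hm3
    rw [← Finite.injective_iff_bijective]
    intro a b hab
    by_contra hne
    have hab' : a ^ 2 + a ^ (q + 2) + a ^ (q ^ 2 + 2 * q) + a ^ (3 * q ^ 2) + a ^ 3
        = b ^ 2 + b ^ (q + 2) + b ^ (q ^ 2 + 2 * q) + b ^ (3 * q ^ 2) + b ^ 3 := hab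
    have hx0 : a - b ≠ 0 := sub_ne_zero.mpr hne
    have hS : a + φ a + φ (φ a) = b + φ b + φ (φ b) := by
      apply sqinj
      rw [← keyB a, ← keyB b, hab']
    obtain ⟨s, hsdef⟩ : ∃ s : F, s = a + φ a + φ (φ a) := ⟨_, rfl⟩
    have hS' : s = b + φ b + φ (φ b) := by rw [hsdef]; exact hS
    have hsφ : φ s = s := by rw [hsdef]; exact hφS a
    have hphix : φ (a - b) = φ a - φ b := map_sub φ a b
    have hphi2x : φ (φ (a - b)) = φ (φ a) - φ (φ b) := by rw [hphix, map_sub]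
    have A1 := keyA a
    have A2 := keyA b
    rw [← hsdef] at A1
    rw [← hS'] at A2
    have hE : (1 + s) * (a - b) ^ 2 + s ^ 2 * ((a - b) + φ (a - b)) = 0 := by
      have hRR : (1 + s) * a ^ 2 + s ^ 2 * (a + φ a) + s ^ 3
          = (1 + s) * b ^ 2 + s ^ 2 * (b + φ b) + s ^ 3 := by
        rw [← A1, ← A2]; exact hab'
      linear_combination hRR + s ^ 2 * hphix + ((1 + s) * (b ^ 2 - a * b)) * h2
    have hTx : (a - b) + φ (a - b) + φ (φ (a - b)) = 0 := by
      linear_combination hphix + hphi2x + hS' - hsdef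
    by_cases hs0 : s = 0
    · rw [hs0] at hE
      have hz : (a - b) ^ 2 = 0 := by linear_combination hE
      exact hx0 (sq_eq_zero_iff.mp hz)
    by_cases hs1 : s = 1
    · rw [hs1] at hE
      have hfix : φ (a - b) = a - b := by
        linear_combination hE + (-(a - b) ^ 2 - (a - b)) * h2
      have hfix2 : φ (φ (a - b)) = a - b := by rw [hfix]; exact hfix
      have : a - b = 0 := by
        linear_combination hTx - hfix - hfix2 - (a - b) * h2
      exact hx0 this
    obtain ⟨r, hrx⟩ : ∃ r : F, φ (a - b) = r * (a - b) :=
      ⟨φ (a - b) * (a - b)⁻¹, by field_simp⟩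
    have h6 : (a - b) * ((1 + s) * (a - b) + s ^ 2 * (1 + r)) = 0 := by
      rw [hrx] at hE
      linear_combination hE
    have hE2 : (1 + s) * (a - b) + s ^ 2 * (1 + r) = 0 :=
      (mul_eq_zero.mp h6).resolve_left hx0
    have hE2q := congrArg φ hE2
    simp only [map_add, map_mul, map_pow, map_one, map_zero, hsφ] at hE2q
    have hRq' : s ^ 2 * (φ r - (1 + r + r ^ 2)) = 0 := by
      linear_combination hE2q - (1 + s) * hrx - r * hE2 - s ^ 2 * h2
    have hRq : φ r = 1 + r + r ^ 2 := by
      have h8 := (mul_eq_zero.mp hRq').resolve_left (pow_ne_zero 2 hs0)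
      linear_combination h8
    have hphi2 : φ (φ (a - b)) = φ r * (r * (a - b)) := by
      rw [hrx, map_mul, hrx]
    have h7 : (a - b) * (1 + r + φ r * r) = 0 := by
      linear_combination hTx - hrx - hphi2
    have h8 := (mul_eq_zero.mp h7).resolve_left hx0
    have hcube : r ^ 3 + r ^ 2 + 1 = 0 := by
      rw [hRq] at h8
      linear_combination h8 - r * h2
    have hr7 := hr7gen r hcube
    have hr8k := hr8kgen r hr7
    have hr1 := hr1gen r hcube
    have hφr : φ r = r ^ q := hφdef r
    have hc : m % 3 = 0 ∨ m % 3 = 1 := by omega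
    rcases hc with hc | hc
    · have e : q = 8 ^ (m / 3) := by
        rw [hq, show (8:ℕ) = 2 ^ 3 from rfl, ← pow_mul]
        congr 1
        omega
      have hfr : φ r = r := by rw [hφr, e, hr8k]
      rw [hfr] at hRq
      have hr2 : r ^ 2 = 1 := by linear_combination -hRq - h2
      exact hr1 (sqinj r 1 (by rw [hr2, one_pow]))
    · have e : q = 8 ^ (m / 3) * 2 := by
        rw [hq, show (8:ℕ) = 2 ^ 3 from rfl, ← pow_mul, ← pow_succ]
        congr 1
        omega
      have hfr : φ r = r ^ 2 := by rw [hφr, e, pow_mul, hr8k]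
      rw [hfr] at hRq
      exact hr1 (by linear_combination -hRq - h2)
end

section
/- Let q = 2^m and let k, i be positive integers. Then f(x) = x^{2^k+1} + x^{(2^k+1)q} + x^{(2^k+1)q^2} + x^{2^i} + x^{2^i q} is a permutation polynomial of F_{q^3} if and only if gcd(2^k+1, q-1) = 1. -/
/-!
Write `N = 2^k + 1`, `L x = x^(2^i)` and `T x = x + x^q + x^(q^2)` for the trace of
`𝔽_{q^3}/𝔽_q`. In characteristic 2 the polynomial is `f x = T (x^N) + L (x + x^q)`, so
`f(x)^q + f(x)^(q^2) = L (x + x^q)` and `f a = f b` forces `c = b - a ∈ 𝔽_q`. For such `c` one has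
`f (a + c) = f a + (T a + c)^N + (T a)^N`, and on `𝔽_q` itself `f` is `x ↦ x^N`. Hence `f` permutes
`𝔽_{q^3}` iff `x ↦ x^N` is injective on `𝔽_q`, i.e. iff `𝔽_q^×` has no nontrivial `N`-th root of
unity, i.e. iff `gcd(N, q - 1) = 1`.
-/

open Function

section

variable {R : Type*} [CommRing R]

def permPoly (k i q : ℕ) (x : R) : R :=
  x ^ (2 ^ k + 1) + x ^ ((2 ^ k + 1) * q) + x ^ ((2 ^ k + 1) * q ^ 2)
    + x ^ (2 ^ i) + x ^ (2 ^ i * q)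

def relTrace (q : ℕ) (x : R) : R := x + x ^ q + x ^ q ^ 2

variable {k i q : ℕ}

lemma permPoly_eq (x : R) : permPoly k i q x =
    x ^ (2 ^ k + 1) + (x ^ q) ^ (2 ^ k + 1) + (x ^ q ^ 2) ^ (2 ^ k + 1)
      + x ^ 2 ^ i + (x ^ q) ^ 2 ^ i := by
  simp only [permPoly, pow_mul']

variable [CharP R 2]

lemma permPoly_of_pow_eq_self {c : R} (hc : c ^ q = c) :
    permPoly k i q c = c ^ (2 ^ k + 1) := by
  have hc2 : c ^ q ^ 2 = c := by rw [sq, pow_mul, hc, hc]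
  rw [permPoly_eq, hc, hc2]
  linear_combination (c ^ (2 ^ k + 1) + c ^ 2 ^ i) * CharTwo.two_eq_zero (R := R)

variable {m : ℕ}

lemma iterateFrobenius_two_apply (hq : q = 2 ^ m) (x : R) :
    iterateFrobenius R 2 m x = x ^ q := by
  rw [iterateFrobenius_def, hq]

lemma permPoly_add_of_pow_eq_self (hq : q = 2 ^ m) (a : R) {c : R} (hc : c ^ q = c) :
    permPoly k i q (a + c) =
      permPoly k i q a + (relTrace q a + c) ^ (2 ^ k + 1) + relTrace q a ^ (2 ^ k + 1) := by
  have hc2 : c ^ q ^ 2 = c := by rw [sq, pow_mul, hc, hc]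
  have hadd : ∀ x y : R, (x + y) ^ q = x ^ q + y ^ q := fun x y => by
    rw [← iterateFrobenius_two_apply hq, map_add, iterateFrobenius_two_apply hq,
      iterateFrobenius_two_apply hq]
  have hadd2 : ∀ x y : R, (x + y) ^ q ^ 2 = x ^ q ^ 2 + y ^ q ^ 2 := fun x y => by
    rw [sq, pow_mul, pow_mul, pow_mul, hadd, hadd]
  have hN : ∀ x y : R, (x + y) ^ (2 ^ k + 1) = (x ^ 2 ^ k + y ^ 2 ^ k) * (x + y) := fun x y => by
    rw [pow_succ, add_pow_char_pow]
  rw [permPoly_eq, permPoly_eq, hadd, hadd2, hc, hc2, relTrace]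
  simp only [hN, add_pow_char_pow]
  linear_combination (c ^ 2 ^ k * c + c ^ 2 ^ i
    - (a ^ 2 ^ k + (a ^ q) ^ 2 ^ k + (a ^ q ^ 2) ^ 2 ^ k) * (a + a ^ q + a ^ q ^ 2))
    * CharTwo.two_eq_zero (R := R)

lemma relTrace_pow_eq_self (hq : q = 2 ^ m) {x : R} (hx : x ^ q ^ 3 = x) :
    relTrace q x ^ q = relTrace q x := by
  have hxq : (x ^ q ^ 2) ^ q = x := by rw [← pow_mul, ← pow_succ, hx]
  have hxq' : (x ^ q) ^ q = x ^ q ^ 2 := by rw [← pow_mul, sq]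
  rw [relTrace, ← iterateFrobenius_two_apply hq, map_add, map_add]
  simp only [iterateFrobenius_two_apply hq, hxq, hxq']
  ring

lemma permPoly_pow (hq : q = 2 ^ m) (x : R) :
    permPoly k i q x ^ q = permPoly k i q (x ^ q) := by
  rw [← iterateFrobenius_two_apply hq]
  simp only [permPoly, map_add, map_pow]
  rw [iterateFrobenius_two_apply hq]

lemma permPoly_pow_add_pow_sq (hq : q = 2 ^ m) {x : R} (hx : x ^ q ^ 3 = x) :
    permPoly k i q x ^ q + permPoly k i q x ^ q ^ 2 = (x + x ^ q) ^ 2 ^ i := by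
  have h11 : (x ^ q) ^ q = x ^ q ^ 2 := by rw [← pow_mul, sq]
  have h12 : (x ^ q) ^ q ^ 2 = x := by rw [← pow_mul, ← pow_succ', hx]
  have h21 : (x ^ q ^ 2) ^ q = x := by rw [← pow_mul, ← pow_succ, hx]
  have h22 : (x ^ q ^ 2) ^ q ^ 2 = x ^ q := by
    rw [← pow_mul, ← pow_add, show 2 + 2 = 3 + 1 by rfl, pow_succ, pow_mul, hx]
  rw [sq q, pow_mul, permPoly_pow hq, permPoly_pow hq, h11, permPoly_eq, permPoly_eq,
    h11, h12, h21, h22, add_pow_char_pow]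
  linear_combination (x ^ (2 ^ k + 1) + (x ^ q) ^ (2 ^ k + 1) + (x ^ q ^ 2) ^ (2 ^ k + 1)
    + (x ^ q ^ 2) ^ 2 ^ i) * CharTwo.two_eq_zero (R := R)

end

lemma pow_injOn_setOf_pow_eq_self {G₀ : Type*} [CommGroupWithZero G₀] {n q : ℕ} (hn : n ≠ 0)
    (hq : q ≠ 0) (hcop : n.Coprime (q - 1)) :
    Set.InjOn (fun x : G₀ => x ^ n) {x | x ^ q = x} := by
  intro x (hx : x ^ q = x) y (hy : y ^ q = y) (hxy : x ^ n = y ^ n)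
  by_cases hy0 : y = 0
  · subst hy0
    exact (pow_eq_zero_iff hn).mp (hxy.trans (zero_pow hn))
  have hx0 : x ≠ 0 := by
    rintro rfl
    exact hy0 ((pow_eq_zero_iff hn).mp (hxy.symm.trans (zero_pow hn)))
  have hzn : (x / y) ^ n = 1 := by rw [div_pow, hxy, div_self (pow_ne_zero n hy0)]
  have hzq : (x / y) ^ (q - 1) = 1 := by
    apply mul_right_cancel₀ (div_ne_zero hx0 hy0)
    rw [pow_sub_one_mul hq, one_mul, div_pow, hx, hy]
  exact (div_eq_one_iff_eq hy0).mp ((pow_eq_one_iff_of_coprime hcop).mp ⟨hzn, hzq⟩)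

lemma exists_ne_one_pow_eq_one_of_gcd_ne_one {G : Type*} [Group G] [Fintype G] {n d : ℕ}
    (hd : d ∣ Fintype.card G) (h : n.gcd d ≠ 1) :
    ∃ z : G, z ≠ 1 ∧ z ^ n = 1 ∧ z ^ d = 1 := by
  obtain ⟨p, hp, hpd⟩ := Nat.exists_prime_and_dvd h
  have : Fact p.Prime := ⟨hp⟩
  obtain ⟨z, hz⟩ :=
    exists_prime_orderOf_dvd_card p (hpd.trans ((Nat.gcd_dvd_right _ _).trans hd))
  refine ⟨z, ?_, ?_, ?_⟩
  · rintro rfl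
    exact hp.ne_one (orderOf_one (G := G) ▸ hz).symm
  · exact orderOf_dvd_iff_pow_eq_one.mp (hz ▸ hpd.trans (Nat.gcd_dvd_left _ _))
  · exact orderOf_dvd_iff_pow_eq_one.mp (hz ▸ hpd.trans (Nat.gcd_dvd_right _ _))

theorem permPoly_injective {F : Type*} [Field F] [CharP F 2] {k i q m : ℕ} (hq : q = 2 ^ m)
    (hF : ∀ x : F, x ^ q ^ 3 = x) (hcop : Nat.Coprime (2 ^ k + 1) (q - 1)) :
    Injective (permPoly k i q : F → F) := by
  intro a b hab
  have hc : (b - a) ^ q = b - a := by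
    have h := congrArg (fun y => y ^ q + y ^ q ^ 2) hab
    simp only [permPoly_pow_add_pow_sq hq (hF _)] at h
    have h' : a + a ^ q = b + b ^ q :=
      iterateFrobenius_inj F 2 i (by simpa only [iterateFrobenius_def] using h)
    rw [← iterateFrobenius_two_apply hq, map_sub, iterateFrobenius_two_apply hq,
      iterateFrobenius_two_apply hq]
    linear_combination -h' + (a - b) * CharTwo.two_eq_zero (R := F)
  have hT := relTrace_pow_eq_self hq (hF a)
  have hTc : (relTrace q a + (b - a)) ^ q = relTrace q a + (b - a) := by
    rw [← iterateFrobenius_two_apply hq, map_add, iterateFrobenius_two_apply hq,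
      iterateFrobenius_two_apply hq, hT, hc]
  have hpow : (relTrace q a + (b - a)) ^ (2 ^ k + 1) = relTrace q a ^ (2 ^ k + 1) := by
    have h := permPoly_add_of_pow_eq_self (k := k) (i := i) hq a hc
    rw [add_sub_cancel, ← hab] at h
    linear_combination -h - relTrace q a ^ (2 ^ k + 1) * CharTwo.two_eq_zero (R := F)
  have hq0 : q ≠ 0 := hq ▸ pow_ne_zero m two_ne_zero
  have := pow_injOn_setOf_pow_eq_self (by positivity) hq0 hcop hTc hT hpow
  linear_combination -this

theorem stmt_8_general (m k i : ℕ) (q : ℕ) (hq : q = 2 ^ m)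
    (F : Type*) [Field F] [Fintype F] (hF : Fintype.card F = q ^ 3) :
    Function.Bijective
      (fun x : F => x ^ (2 ^ k + 1) + x ^ ((2 ^ k + 1) * q) + x ^ ((2 ^ k + 1) * q ^ 2)
        + x ^ (2 ^ i) + x ^ (2 ^ i * q))
      ↔ Nat.gcd (2 ^ k + 1) (q - 1) = 1 := by
  classical
  have : CharP F 2 := charP_of_card_eq_prime_pow (hF.trans (by rw [hq, ← pow_mul]))
  have hfix (x : F) : x ^ q ^ 3 = x := hF ▸ FiniteField.pow_card x
  change Bijective (permPoly k i q) ↔ _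
  refine ⟨fun hbij => ?_, fun hcop => (permPoly_injective hq hfix hcop).bijective_of_finite⟩
  by_contra hg
  have hcard : q - 1 ∣ Fintype.card Fˣ := by
    rw [Fintype.card_units, hF]
    simpa using Nat.sub_dvd_pow_sub_pow q 1 3
  obtain ⟨z, hz1, hzN, hzq⟩ := exists_ne_one_pow_eq_one_of_gcd_ne_one hcard hg
  have hzq' : (z : F) ^ q = z := by
    rw [← pow_sub_one_mul (hq ▸ pow_ne_zero m two_ne_zero), ← Units.val_pow_eq_pow_val, hzq,
      Units.val_one, one_mul]
  refine hz1 (Units.val_eq_one.mp (hbij.injective ?_))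
  rw [permPoly_of_pow_eq_self hzq', permPoly_of_pow_eq_self (one_pow q),
    ← Units.val_pow_eq_pow_val, hzN, Units.val_one, one_pow]

theorem stmt_8 (m k i : ℕ) (hm : 0 < m) (hk : 0 < k) (hi : 0 < i) (q : ℕ) (hq : q = 2 ^ m)
    (F : Type*) [Field F] [Fintype F] (hF : Fintype.card F = q ^ 3) :
    Function.Bijective
      (fun x : F => x ^ (2 ^ k + 1) + x ^ ((2 ^ k + 1) * q) + x ^ ((2 ^ k + 1) * q ^ 2)
        + x ^ (2 ^ i) + x ^ (2 ^ i * q))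
      ↔ Nat.gcd (2 ^ k + 1) (q - 1) = 1 :=
  stmt_8_general m k i q hq F hF
end

section
/- Let q = 2^m with m odd, and let a, b, c ∈ F_{q^3} with b = a^q and c = a^{q^2}. If a^2 + b^2 + c^2 + ab + ac + bc = 0, then a ∈ F_q. -/
theorem stmt_10 (m : ℕ) (hm : 0 < m) (hmo : Odd m) (q : ℕ) (hq : q = 2 ^ m)
    (F : Type*) [Field F] [Fintype F] (hF : Fintype.card F = q ^ 3)
    (a b c : F) (hb : b = a ^ q) (hc : c = a ^ (q ^ 2))
    (h : a ^ 2 + b ^ 2 + c ^ 2 + a * b + a * c + b * c = 0) :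
    a ^ q = a := by
  -- characteristic 2
  have hcard := FiniteField.cast_card_eq_zero F
  rw [hF, hq] at hcard
  push_cast at hcard
  have h2 : (2 : F) = 0 := by
    have h3 := pow_eq_zero_iff (three_ne_zero (α := ℕ)) |>.mp hcard
    exact pow_eq_zero_iff hm.ne' |>.mp h3
  rw [← hb]
  set u : F := a + b with hu_def
  set v : F := b + c with hv_def
  have key : u ^ 2 + u * v + v ^ 2 = 0 := by
    rw [hu_def, hv_def]
    linear_combination h + (b ^ 2 + a * b + b * c) * h2
  by_cases hu : u = 0
  · -- a + b = 0 so b = a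
    linear_combination hu - a * h2
  · exfalso
    set t : F := v * u⁻¹ with ht_def
    have hw : u * u⁻¹ = 1 := mul_inv_cancel₀ hu
    have ht : t ^ 2 + t + 1 = 0 := by
      rw [ht_def]
      linear_combination (u⁻¹) ^ 2 * key - (v * u⁻¹ + u * u⁻¹ + 1) * hw
    have ht3 : t ^ 3 = 1 := by linear_combination (t - 1) * ht
    have ht0 : t ≠ 0 := by
      intro h0; rw [h0] at ht; norm_num at ht
    have ht1 : t ≠ 1 := by
      intro h1; rw [h1] at ht
      have : (1 : F) = 0 := by linear_combination ht - h2
      exact one_ne_zero this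
    have hp : t ^ (Fintype.card F - 1) = 1 := FiniteField.pow_card_sub_one_eq_one t ht0
    rw [hF, hq] at hp
    obtain ⟨j, hj⟩ := hmo
    have h64 : 64 ^ j % 3 = 1 := by simp [Nat.pow_mod]
    have hpow : (2 ^ m) ^ 3 = 8 * 64 ^ j := by
      subst hj
      rw [← pow_mul, show (2 * j + 1) * 3 = 6 * j + 3 by ring, pow_add, pow_mul]
      norm_num [mul_comm]
    have hdm := Nat.div_add_mod (64 ^ j) 3
    obtain ⟨k, hk⟩ : ∃ k, (2 ^ m) ^ 3 - 1 = 3 * k + 1 :=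
      ⟨8 * (64 ^ j / 3) + 2, by rw [hpow]; omega⟩
    rw [hk, pow_add, pow_mul, ht3, one_pow, pow_one, one_mul] at hp
    exact ht1 hp
end

section
/- Let q = 2^m and let a ∈ F_{q^3} be nonzero with b = a^q, c = a^{q^2}. If a + b + c = 0 and ab + a + b^2 = 0, then a contradiction arises; i.e., there is no nonzero a ∈ F_{q^3} with Tr_{q^3/q}(a) = 0 and a·a^q + a + a^{2q} = 0. -/
theorem stmt_12 (m : ℕ) (hm : 0 < m) (q : ℕ) (hq : q = 2 ^ m)
    (F : Type*) [Field F] [Fintype F] (hF : Fintype.card F = q ^ 3) :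
    ¬ ∃ a : F, a ≠ 0 ∧ a + a ^ q + a ^ (q ^ 2) = 0 ∧
      a * a ^ q + a + (a ^ q) ^ 2 = 0 := by
  rintro ⟨a, ha, h1, h2⟩
  have hq0 : q ≠ 0 := by rw [hq]; positivity
  -- characteristic 2
  haveI : CharP F 2 := by
    have hp : (ringChar F).Prime := CharP.char_is_prime F (ringChar F)
    obtain ⟨n, -, hcard⟩ := FiniteField.card F (ringChar F)
    have hpow : (ringChar F) ^ (n : ℕ) = 2 ^ (m * 3) := by
      rw [← hcard, hF, hq, ← pow_mul]
    have hdvd : ringChar F ∣ 2 ^ (m * 3) := hpow ▸ dvd_pow_self _ n.ne_zero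
    have h2d := Nat.Prime.dvd_of_dvd_pow hp hdvd
    have : ringChar F = 2 := (Nat.prime_dvd_prime_iff_eq hp Nat.prime_two).mp h2d
    exact this ▸ ringChar.charP F
  haveI : Fact (Nat.Prime 2) := ⟨Nat.prime_two⟩
  have h2' : (2 : F) = 0 := by exact_mod_cast CharP.cast_eq_zero F 2
  -- apply Frobenius x ↦ x ^ q to h2
  have h3 : a ^ q * a ^ (q ^ 2) + a ^ q + (a ^ (q ^ 2)) ^ 2 = 0 := by
    have := congrArg (iterateFrobenius F 2 m) h2
    simpa [map_add, map_mul, map_pow, iterateFrobenius_def, ← hq,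
      ← pow_mul, sq, zero_pow hq0, mul_comm, mul_assoc, mul_left_comm] using this
  have hcab : a ^ (q ^ 2) = a + a ^ q := by
    linear_combination (-1 : F) * h1 + (a ^ (q ^ 2)) * h2'
  rw [hcab] at h3
  have hab : (a + a ^ q) * (a + a ^ q + 1) = 0 := by linear_combination h2 + h3 + (-(a * a ^ q) - (a ^ q) ^ 2) * h2'
  rcases mul_eq_zero.mp hab with h | h
  · exact ha (by linear_combination h2 - (a ^ q) * h)
  · have : (1 : F) = 0 := by linear_combination h2 + (1 - a ^ q) * h + (-a) * h2'
    exact one_ne_zero this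
end

section
/- Let q = 2^m with m even. Then there exists α ∈ F_q, α ≠ 0, such that x^3 + α = 0 has no solution in F_q, and for any such α, the quartic x^4 + α x + 1 = 0 has exactly one solution γ_0 in F_q. -/
theorem stmt_15 (m : ℕ) (hm : 0 < m) (hme : Even m) (q : ℕ) (hq : q = 2 ^ m)
    (K : Type*) [Field K] [Fintype K] (hK : Fintype.card K = q) :
    (∃ α : K, α ≠ 0 ∧ ∀ x : K, x ^ 3 + α ≠ 0) ∧
      (∀ α : K, α ≠ 0 → (∀ x : K, x ^ 3 + α ≠ 0) →
        ∃! γ : K, γ ^ 4 + α * γ + 1 = 0) := by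
  subst hq
  -- characteristic 2
  obtain ⟨p, hcp⟩ := CharP.exists K
  haveI := hcp
  obtain ⟨n, hp, hcard⟩ := FiniteField.card K p
  have hp2 : p = 2 := by
    have hdvd : p ∣ 2 ^ m := by
      rw [← hK, hcard]; exact dvd_pow_self _ (by positivity)
    exact (Nat.prime_dvd_prime_iff_eq hp Nat.prime_two).mp (hp.dvd_of_dvd_pow hdvd)
  subst hp2
  classical
  haveI : DecidableEq K := Classical.decEq K
  constructor
  · -- existence of a noncube
    have h3 : (3 : ℕ) ∣ Fintype.card Kˣ := by
      rw [Fintype.card_units, hK]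
      obtain ⟨k, hk⟩ := hme
      have h1 : 2 ^ m % 3 = 1 := by
        subst hk
        rw [pow_add, ← mul_pow, Nat.pow_mod]
        norm_num
      have h2 : 1 ≤ 2 ^ m := Nat.one_le_two_pow
      omega
    haveI : Fact (Nat.Prime 3) := ⟨by norm_num⟩
    obtain ⟨g, hg⟩ := exists_prime_orderOf_dvd_card 3 h3
    have hg1 : (g : K) ≠ 1 := by
      intro h
      have : g = 1 := Units.ext h
      rw [this, orderOf_one] at hg; omega
    have hnotinj : ¬ Function.Injective (fun x : K => x ^ 3) := by
      intro h
      apply hg1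
      apply h
      show (g : K) ^ 3 = 1 ^ 3
      rw [one_pow, ← Units.val_pow_eq_pow_val, ← hg, pow_orderOf_eq_one, Units.val_one]
    have hnotsurj : ¬ Function.Surjective (fun x : K => x ^ 3) := by
      intro h
      exact hnotinj ((Finite.injective_iff_surjective).mpr h)
    rw [Function.Surjective] at hnotsurj
    push_neg at hnotsurj
    obtain ⟨α, hα⟩ := hnotsurj
    refine ⟨α, ?_, ?_⟩
    · intro h0; exact hα 0 (by simp [h0])
    · intro x hx
      apply hα x
      have : x ^ 3 = -α := by linear_combination hx
      rw [this, CharTwo.neg_eq]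
  · intro α hα0 hα
    set F : K → K := fun x => x ^ 4 + α * x + 1 with hF
    have hinj : Function.Injective F := by
      intro x y hxy
      simp only [hF] at hxy
      have h4 : (x - y) ^ 4 + α * (x - y) = 0 := by
        have hsub : (x - y) ^ 4 = x ^ 4 - y ^ 4 := by
          have := sub_pow_char_pow (p := 2) (n := 2) (x := x) (y := y)
          norm_num at this
          exact this
        rw [hsub]; linear_combination hxy
      have hfac : (x - y) * ((x - y) ^ 3 + α) = 0 := by linear_combination h4
      rcases mul_eq_zero.mp hfac with h | h
      · exact sub_eq_zero.mp h
      · exact absurd h (hα (x - y))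
    have hsurj : Function.Surjective F := (Finite.injective_iff_surjective).mp hinj
    obtain ⟨γ, hγ⟩ := hsurj 0
    refine ⟨γ, hγ, fun y hy => hinj (by rw [hγ]; exact hy)⟩
end

section
/- Let q = 2^m with m ≡ 1 (mod 3). Then every root α of x^3 + x^2 + 1 over F_2 lies in F_{q^3}, satisfies α^q = α^2 and α^{q^2} = α^4, and f(α) = f(1) where f(x) = x + x^{2q^2+2q} + x^{2q^2+2} + x^4 + x^{4q}; hence f is not injective on F_{q^3}. -/
set_option maxHeartbeats 1000000 in
theorem stmt_16 (m : ℕ) (hm : 0 < m) (hm3 : m % 3 = 1) (q : ℕ) (hq : q = 2 ^ m)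
    (F : Type*) [Field F] [Fintype F] (hF : Fintype.card F = q ^ 3) :
    (∃ α : F, α ^ 3 + α ^ 2 + 1 = 0) ∧
      (∀ α : F, α ^ 3 + α ^ 2 + 1 = 0 →
        α ^ q = α ^ 2 ∧ α ^ (q ^ 2) = α ^ 4 ∧
        (fun x : F => x + x ^ (2 * q ^ 2 + 2 * q) + x ^ (2 * q ^ 2 + 2) + x ^ 4 + x ^ (4 * q)) α
          = (fun x : F => x + x ^ (2 * q ^ 2 + 2 * q) + x ^ (2 * q ^ 2 + 2) + x ^ 4 + x ^ (4 * q)) 1) ∧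
      ¬ Function.Injective
        (fun x : F => x + x ^ (2 * q ^ 2 + 2 * q) + x ^ (2 * q ^ 2 + 2) + x ^ 4 + x ^ (4 * q)) := by
  -- characteristic 2
  have hcard : Fintype.card F = 2 ^ (3 * m) := by
    rw [hF, hq, ← pow_mul, mul_comm]
  have hchar2 : (2 : F) = 0 := by
    set p := ringChar F with hp
    have hpp : Nat.Prime p := CharP.char_is_prime F p
    obtain ⟨n, -, hcn⟩ := FiniteField.card F p
    have hdvd : p ∣ 2 ^ (3 * m) := by
      rw [← hcard, hcn]
      exact dvd_pow_self p n.pos.ne'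
    have hp2 : p = 2 :=
      (Nat.prime_dvd_prime_iff_eq hpp Nat.prime_two).mp (hpp.dvd_of_dvd_pow hdvd)
    have h := ringChar.Nat.cast_ringChar (R := F)
    rw [← hp, hp2] at h
    exact_mod_cast h
  classical
  haveI : Fintype Fˣ := Fintype.ofFinite _
  -- an element b of order 7
  have h7 : (7 : ℕ) ∣ Fintype.card Fˣ := by
    have hcu : Fintype.card Fˣ = Fintype.card F - 1 := by
      rw [← Nat.card_eq_fintype_card, Nat.card_units, Nat.card_eq_fintype_card]
    rw [hcu, hcard]
    have h8 : (8 : ℕ) ^ m = 2 ^ (3 * m) := by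
      rw [pow_mul]; norm_num
    calc (7 : ℕ) = 8 - 1 := rfl
      _ ∣ 8 ^ m - 1 ^ m := Nat.sub_dvd_pow_sub_pow 8 1 m
      _ = 2 ^ (3 * m) - 1 := by rw [one_pow, h8]
  haveI : Fact (Nat.Prime 7) := ⟨by norm_num⟩
  obtain ⟨u, hu⟩ := exists_prime_orderOf_dvd_card 7 h7
  set b : F := (u : F) with hbdef
  have hb7 : b ^ 7 = 1 := by
    have h1 : u ^ 7 = 1 := by rw [← hu]; exact pow_orderOf_eq_one u
    have h2 := congrArg (Units.val) h1
    push_cast at h2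
    exact h2
  have hb1 : b ≠ 1 := by
    intro h
    have : u = 1 := Units.ext h
    rw [this, orderOf_one] at hu
    omega
  have hb0 : b ≠ 0 := u.ne_zero
  -- root of x^3+x^2+1
  have hroot : ∃ α : F, α ^ 3 + α ^ 2 + 1 = 0 := by
    have hprod : (b + 1) * (b ^ 3 + b + 1) * (b ^ 3 + b ^ 2 + 1) = 0 := by
      linear_combination hb7 + (1 + b + b ^ 2 + 2 * b ^ 3 + 2 * b ^ 4 + b ^ 5 + b ^ 6) * hchar2
    rcases mul_eq_zero.mp hprod with h | h
    · rcases mul_eq_zero.mp h with h | h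
      · exact absurd (by linear_combination h - hchar2) hb1
      · refine ⟨b⁻¹, ?_⟩
        have heq : (b⁻¹ ^ 3 + b⁻¹ ^ 2 + 1) * b ^ 3 = b ^ 3 + b + 1 := by
          field_simp
          ring
        have h2 := heq.trans h
        rcases mul_eq_zero.mp h2 with h3 | h3
        · exact h3
        · exact absurd (pow_eq_zero_iff (by norm_num) |>.mp h3) hb0
    · exact ⟨b, h⟩
  -- q ≡ 2 mod 7 etc.
  obtain ⟨k, hk⟩ : ∃ k, m = 3 * k + 1 := ⟨m / 3, by omega⟩
  obtain ⟨s, hs⟩ : ∃ s, (8 : ℕ) ^ k = 7 * s + 1 := by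
    have := Nat.sub_dvd_pow_sub_pow 8 1 k
    simp only [one_pow] at this
    obtain ⟨s, hs⟩ := this
    exact ⟨s, by have : 1 ≤ (8:ℕ)^k := Nat.one_le_pow _ _ (by norm_num); omega⟩
  have hqs : q = 7 * (2 * s) + 2 := by
    rw [hq, hk, pow_succ, pow_mul, show (2:ℕ)^3 = 8 from rfl, hs]
    ring
  -- main computation for a root α
  have main : ∀ α : F, α ^ 3 + α ^ 2 + 1 = 0 →
      α ^ q = α ^ 2 ∧ α ^ (q ^ 2) = α ^ 4 ∧
      (α + α ^ (2 * q ^ 2 + 2 * q) + α ^ (2 * q ^ 2 + 2) + α ^ 4 + α ^ (4 * q)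
        = 1 + 1 ^ (2 * q ^ 2 + 2 * q) + 1 ^ (2 * q ^ 2 + 2) + 1 ^ 4 + 1 ^ (4 * q)) := by
    intro α hα
    have hα7 : α ^ 7 = 1 := by
      linear_combination (α ^ 4 - α ^ 3 + α ^ 2 - 2 * α + 3) * hα
        + (α - 2 * α ^ 2 - 2) * hchar2
    have key : ∀ t r : ℕ, α ^ (7 * t + r) = α ^ r := by
      intro t r
      rw [pow_add, pow_mul, hα7, one_pow, one_mul]
    have hq2 : q ^ 2 = 7 * (7 * (2*s) * (2*s) + 2 * (2 * (2*s))) + 4 := by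
      rw [hqs]; ring
    have e1 : α ^ q = α ^ 2 := by rw [hqs, key]
    have e2 : α ^ (q ^ 2) = α ^ 4 := by rw [hq2, key]
    refine ⟨e1, e2, ?_⟩
    obtain ⟨t, ht⟩ : ∃ t, q ^ 2 = 7 * t + 4 := ⟨_, hq2⟩
    have e3 : α ^ (2 * q ^ 2 + 2 * q) = α ^ 5 := by
      have : 2 * q ^ 2 + 2 * q = 7 * (2 * t + 4 * s + 1) + 5 := by rw [ht, hqs]; ring
      rw [this, key]
    have e4 : α ^ (2 * q ^ 2 + 2) = α ^ 3 := by
      have : 2 * q ^ 2 + 2 = 7 * (2 * t + 1) + 3 := by rw [ht]; ring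
      rw [this, key]
    have e5 : α ^ (4 * q) = α ^ 1 := by
      have : 4 * q = 7 * (8 * s + 1) + 1 := by rw [hqs]; ring
      rw [this, key]
    rw [e3, e4, e5, one_pow, one_pow, one_pow, one_pow]
    linear_combination (α ^ 2 + 1) * hα + (α - α ^ 2 - 3) * hchar2
  refine ⟨hroot, fun α hα => main α hα, ?_⟩
  intro hinj
  obtain ⟨α, hα⟩ := hroot
  have hne : α ≠ 1 := by
    intro h
    rw [h] at hα
    norm_num at hα
    exact one_ne_zero (by linear_combination hα - hchar2)
  exact hne (hinj (main α hα).2.2)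
end

section
/- Let q = 2^m with m ≡ 2 (mod 3), and let α ∈ F_8 ⊆ F_{q^3} be a root of x^3 + x^2 + 1. Then α^q = α^4, α^{q^2} = α^2, and f(α) = f(1) = 1 for f(x) = x^2 + x^{2q^2+2q-2} + x^{2q^3+2q^2-2q} + x^{q^2-q+1} + x^{q^3-q^2+q}; hence f is not a permutation of F_{q^3}. -/
theorem stmt_17 (m : ℕ) (hm : 0 < m) (hm3 : m % 3 = 2) (q : ℕ) (hq : q = 2 ^ m)
    (F : Type*) [Field F] [Fintype F] (hF : Fintype.card F = q ^ 3)
    (α : F) (hα : α ^ 3 + α ^ 2 + 1 = 0) :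
    α ^ q = α ^ 4 ∧ α ^ (q ^ 2) = α ^ 2 ∧
    (fun x : F => x ^ 2 + x ^ (2 * q ^ 2 + 2 * q - 2) + x ^ (2 * q ^ 3 + 2 * q ^ 2 - 2 * q)
        + x ^ (q ^ 2 - q + 1) + x ^ (q ^ 3 - q ^ 2 + q)) α
      = (fun x : F => x ^ 2 + x ^ (2 * q ^ 2 + 2 * q - 2) + x ^ (2 * q ^ 3 + 2 * q ^ 2 - 2 * q)
        + x ^ (q ^ 2 - q + 1) + x ^ (q ^ 3 - q ^ 2 + q)) 1 ∧
    (fun x : F => x ^ 2 + x ^ (2 * q ^ 2 + 2 * q - 2) + x ^ (2 * q ^ 3 + 2 * q ^ 2 - 2 * q)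
        + x ^ (q ^ 2 - q + 1) + x ^ (q ^ 3 - q ^ 2 + q)) 1 = 1 ∧
    ¬ Function.Bijective
      (fun x : F => x ^ 2 + x ^ (2 * q ^ 2 + 2 * q - 2) + x ^ (2 * q ^ 3 + 2 * q ^ 2 - 2 * q)
        + x ^ (q ^ 2 - q + 1) + x ^ (q ^ 3 - q ^ 2 + q)) := by
  have h2 : (2 : F) = 0 := by
    have hc := FiniteField.cast_card_eq_zero F
    rw [hF, hq, ← pow_mul] at hc
    push_cast at hc
    exact pow_eq_zero_iff (by positivity) |>.mp hc
  have h7 : α ^ 7 = 1 := by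
    linear_combination (α^4+α^3+α^2+1) * hα - (α^6+α^5+α^4+α^3+α^2+1) * h2
  have hpow : ∀ n r : ℕ, n % 7 = r → α ^ n = α ^ r := by
    intro n r h
    conv_lhs => rw [← Nat.div_add_mod n 7]
    rw [pow_add, pow_mul, h7, one_pow, one_mul, h]
  have hq7 : q % 7 = 4 := by
    obtain ⟨k, hk⟩ : ∃ k, m = 3*k+2 := ⟨m/3, by omega⟩
    subst hq hk
    rw [pow_add, pow_mul, Nat.mul_mod, Nat.pow_mod]
    norm_num
  have hq1 : 4 ≤ q := by
    subst hq
    calc 4 = 2^2 := rfl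
    _ ≤ 2^m := Nat.pow_le_pow_right (by norm_num) (by omega)
  obtain ⟨a, ha⟩ : ∃ a, q^2 = a := ⟨_, rfl⟩
  obtain ⟨b, hb⟩ : ∃ b, q^3 = b := ⟨_, rfl⟩
  have hq2 : a % 7 = 2 := by rw [← ha, Nat.pow_mod, hq7]
  have hq3 : b % 7 = 1 := by rw [← hb, Nat.pow_mod, hq7]
  have hle1 : q ≤ a := ha ▸ Nat.le_self_pow (by norm_num) q
  have hle2 : a ≤ b := by rw [← ha, ← hb]; exact Nat.pow_le_pow_right (by omega) (by norm_num)
  have e1 : α ^ q = α ^ 4 := hpow q 4 hq7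
  have e2 : α ^ a = α ^ 2 := hpow a 2 hq2
  have fα : α^2 + α^(2*a+2*q-2) + α^(2*b+2*a-2*q) + α^(a-q+1) + α^(b-a+q) = 1 := by
    rw [hpow (2*a+2*q-2) 3 (by omega), hpow (2*b+2*a-2*q) 5 (by omega),
        hpow (a-q+1) 6 (by omega), hpow (b-a+q) 3 (by omega)]
    linear_combination (α^3-1)*hα + (α^2+α^3)*h2
  have f1 : (1:F)^2 + 1^(2*a+2*q-2) + 1^(2*b+2*a-2*q) + 1^(a-q+1) + 1^(b-a+q) = 1 := by
    simp only [one_pow]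
    linear_combination 2*h2
  have hα1 : α ≠ 1 := by
    intro h
    rw [h] at hα
    have : (1:F) = 0 := by linear_combination hα - h2
    exact one_ne_zero this
  simp only [ha, hb]
  exact ⟨e1, e2, fα.trans f1.symm, f1, fun hb' => hα1 (hb'.injective (fα.trans f1.symm))⟩
end
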